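/- arXiv:2311.14074 — 6 statements merged into one kernel-verified Lean document; each statement's English description precedes it below -/
import Mathlib

section
/- Let A : V₁ → V₂ be a linear map between real inner product spaces with dim V₁ = k. Then the norm of the induced map Λᵏ A on the top exterior power of V₁ satisfies |Λᵏ A| ≤ (1/√k)^k · |A|^k, where |A| denotes the Hilbert–Schmidt (Frobenius) norm of A. Moreover, equality holds if and only if A*g₂ = λ² g₁ with λ² = |A|²/k, i.e., A is conformal with dilation λ. -/
open scoped RealInnerProductSpace

open Finset in
private lemma amgm_aux (k : ℕ) (hk : 1 ≤ k) (x : Fin k → ℝ) (hx : ∀ i, 0 ≤ x i) :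
    (∏ i, x i ≤ ((∑ i, x i) / k) ^ k) ∧
    ((∏ i, x i = ((∑ i, x i) / k) ^ k) ↔ ∀ i, x i = (∑ i, x i) / k) := by
  have hkpos : (0:ℝ) < k := by exact_mod_cast hk
  have hkne : (k:ℝ) ≠ 0 := ne_of_gt hkpos
  set m := (∑ i, x i) / k with hm
  have hne : (Finset.univ : Finset (Fin k)).Nonempty := ⟨⟨0, hk⟩, Finset.mem_univ _⟩
  have hrev : (∀ i, x i = m) → ∏ i, x i = m ^ k := by
    intro h
    rw [Finset.prod_congr rfl (fun i _ => h i), Finset.prod_const, Finset.card_univ,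
      Fintype.card_fin]
  by_cases hpos : ∀ i, 0 < x i
  · have hsum : 0 < ∑ i, x i := Finset.sum_pos (fun i _ => hpos i) hne
    have hm0 : 0 < m := by positivity
    have hprod : 0 < ∏ i, x i := Finset.prod_pos (fun i _ => hpos i)
    have hw : ∑ _i : Fin k, (1:ℝ)/k = 1 := by
      simp [Finset.sum_const, Finset.card_univ, hkne]
    have hmem : ∀ i ∈ Finset.univ, x i ∈ Set.Ioi (0:ℝ) := fun i _ => hpos i
    have hsum' : ∑ i : Fin k, ((1:ℝ)/k) • x i = m := by
      simp only [smul_eq_mul, ← Finset.mul_sum, hm]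
      ring
    have jensen := strictConcaveOn_log_Ioi.concaveOn.le_map_sum
      (t := Finset.univ) (w := fun _ : Fin k => (1:ℝ)/k) (p := x)
      (fun i _ => by positivity) hw hmem
    rw [hsum'] at jensen
    have hlog : ∑ i : Fin k, ((1:ℝ)/k) • Real.log (x i) = (1/k) * Real.log (∏ i, x i) := by
      rw [Real.log_prod (fun i _ => (hpos i).ne'), Finset.mul_sum]
      simp [smul_eq_mul]
    rw [hlog] at jensen
    have hlogle : Real.log (∏ i, x i) ≤ Real.log (m ^ k) := by
      rw [Real.log_pow]
      have h2 := mul_le_mul_of_nonneg_left jensen (le_of_lt hkpos)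
      calc Real.log (∏ i, x i) = k * ((1/k) * Real.log (∏ i, x i)) := by
            field_simp
        _ ≤ k * Real.log m := h2
        _ = (k:ℕ) * Real.log m := by norm_num
    have hineq : ∏ i, x i ≤ m ^ k :=
      (Real.log_le_log_iff hprod (by positivity)).mp hlogle
    refine ⟨hineq, ⟨?_, hrev⟩⟩
    intro heq
    by_contra hcon
    push_neg at hcon
    obtain ⟨i0, hi0⟩ := hcon
    have hex : ∃ j ∈ Finset.univ, ∃ l ∈ (Finset.univ : Finset (Fin k)), x j ≠ x l := by
      by_contra hall
      push_neg at hall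
      apply hi0
      have h3 : ∑ j, x j = ∑ _j : Fin k, x i0 :=
        Finset.sum_congr rfl (fun j hj => hall j hj i0 (Finset.mem_univ _))
      rw [hm, h3]
      simp [Finset.sum_const, Finset.card_univ]
      field_simp
    have strict := strictConcaveOn_log_Ioi.lt_map_sum
      (t := Finset.univ) (w := fun _ : Fin k => (1:ℝ)/k) (p := x)
      (fun i _ => by positivity) hw hmem hex
    rw [hsum', hlog] at strict
    have hlt : Real.log (∏ i, x i) < Real.log (m ^ k) := by
      rw [Real.log_pow]
      have h4 := mul_lt_mul_of_pos_left strict hkpos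
      calc Real.log (∏ i, x i) = k * ((1/k) * Real.log (∏ i, x i)) := by field_simp
        _ < k * Real.log m := h4
        _ = (k:ℕ) * Real.log m := by norm_num
    rw [heq] at hlt
    exact lt_irrefl _ hlt
  · push_neg at hpos
    obtain ⟨i0, hi0⟩ := hpos
    have hxi0 : x i0 = 0 := le_antisymm hi0 (hx i0)
    have hprod0 : ∏ i, x i = 0 := Finset.prod_eq_zero (Finset.mem_univ i0) hxi0
    have hm0 : 0 ≤ m := by
      rw [hm]
      exact div_nonneg (Finset.sum_nonneg fun i _ => hx i) (le_of_lt hkpos)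
    refine ⟨by rw [hprod0]; positivity, ⟨?_, hrev⟩⟩
    intro heq
    have hmzero : m = 0 := by
      have h5 : m ^ k = 0 := by rw [← heq, hprod0]
      exact pow_eq_zero_iff (by omega) |>.mp h5
    have hsum0 : ∑ i, x i = 0 := by
      have h6 := hmzero
      rw [hm, div_eq_zero_iff] at h6
      tauto
    intro i
    rw [hmzero]
    exact (Finset.sum_eq_zero_iff_of_nonneg (fun j _ => hx j)).mp hsum0 i (Finset.mem_univ i)

/-- Hadamard's inequality: for a linear map `A : V₁ → V₂` between real inner product
spaces with `dim V₁ = k`, the norm of the induced map on the top exterior power, which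
equals `√(det ⟪A bᵢ, A bⱼ⟫)` for an orthonormal basis `b` of `V₁`, is at most
`(1/√k)^k |A|^k` where `|A|` is the Hilbert–Schmidt norm, with equality iff `A` is
conformal with dilation `λ`, `λ² = |A|²/k`. -/
theorem stmt_0 {V₁ V₂ : Type*} [NormedAddCommGroup V₁] [InnerProductSpace ℝ V₁]
    [NormedAddCommGroup V₂] [InnerProductSpace ℝ V₂]
    (k : ℕ) (hk : 1 ≤ k) (b : OrthonormalBasis (Fin k) ℝ V₁) (A : V₁ →ₗ[ℝ] V₂) :
    Real.sqrt (Matrix.det (Matrix.of fun i j => ⟪A (b i), A (b j)⟫)) ≤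
      (1 / Real.sqrt k) ^ k * Real.sqrt (∑ i, ‖A (b i)‖ ^ 2) ^ k ∧
    (Real.sqrt (Matrix.det (Matrix.of fun i j => ⟪A (b i), A (b j)⟫)) =
        (1 / Real.sqrt k) ^ k * Real.sqrt (∑ i, ‖A (b i)‖ ^ 2) ^ k ↔
      ∀ v w : V₁, ⟪A v, A w⟫ = (∑ i, ‖A (b i)‖ ^ 2) / k * ⟪v, w⟫) := by
  classical
  have hkpos : (0:ℝ) < k := by exact_mod_cast hk
  set S : ℝ := ∑ i, ‖A (b i)‖ ^ 2 with hS
  set G : Matrix (Fin k) (Fin k) ℝ := Matrix.of fun i j => ⟪A (b i), A (b j)⟫ with hG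
  have hS0 : 0 ≤ S := Finset.sum_nonneg fun i _ => by positivity
  -- G is Hermitian
  have hGherm : G.IsHermitian := by
    ext i j
    simp only [Matrix.conjTranspose_apply, hG, Matrix.of_apply, star_trivial]
    exact real_inner_comm _ _
  -- G is positive semidefinite
  have hGpsd : G.PosSemidef := by
    refine Matrix.PosSemidef.of_dotProduct_mulVec_nonneg hGherm fun x => ?_
    have hx : dotProduct (star x) (G.mulVec x) =
        ⟪A (∑ i, x i • b i), A (∑ j, x j • b j)⟫ := by
      simp only [map_sum, map_smul, sum_inner, inner_sum, real_inner_smul_left,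
        real_inner_smul_right, dotProduct, Matrix.mulVec, star_trivial, hG,
        Matrix.of_apply]
      refine Finset.sum_congr rfl fun i _ => ?_
      rw [Finset.mul_sum]
      refine Finset.sum_congr rfl fun j _ => ?_
      first
        | ring1
        | (rw [real_inner_comm (A (b i)) (A (b j))]; ring1)
        | (rw [real_inner_comm (A (b j)) (A (b i))]; ring1)
    rw [hx]
    exact real_inner_self_nonneg
  -- eigenvalues
  have hEig0 : ∀ i, 0 ≤ hGherm.eigenvalues i := hGpsd.eigenvalues_nonneg
  have hDet : G.det = ∏ i, hGherm.eigenvalues i := by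
    simpa using hGherm.det_eq_prod_eigenvalues
  have hDet0 : 0 ≤ G.det := by
    rw [hDet]; exact Finset.prod_nonneg fun i _ => hEig0 i
  -- trace equals S and equals sum of eigenvalues
  have hTrS : G.trace = S := by
    simp only [Matrix.trace, Matrix.diag, hG, Matrix.of_apply, hS]
    exact Finset.sum_congr rfl fun i _ => real_inner_self_eq_norm_sq _
  have hTrEig : G.trace = ∑ i, hGherm.eigenvalues i := by
    conv_lhs => rw [hGherm.spectral_theorem, Unitary.conjStarAlgAut_apply]
    rw [Matrix.trace_mul_cycle]
    rw [(Matrix.mem_unitaryGroup_iff').mp (Matrix.IsHermitian.eigenvectorUnitary hGherm).2]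
    simp [Matrix.trace_diagonal]
  have hSumEig : ∑ i, hGherm.eigenvalues i = S := by rw [← hTrEig, hTrS]
  -- AM-GM
  obtain ⟨amgm_le, amgm_iff⟩ := amgm_aux k hk hGherm.eigenvalues hEig0
  rw [hSumEig] at amgm_le amgm_iff
  rw [← hDet] at amgm_le amgm_iff
  -- expansion of the bilinear form
  have key : ∀ v w : V₁, ⟪A v, A w⟫ = ∑ i, ∑ j, ⟪b i, v⟫ * ⟪b j, w⟫ * G i j := by
    intro v w
    conv_lhs => rw [← b.sum_repr v, ← b.sum_repr w]
    simp only [map_sum, map_smul, sum_inner, inner_sum, real_inner_smul_left,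
      real_inner_smul_right, hG, Matrix.of_apply, OrthonormalBasis.repr_apply_apply]
    rw [Finset.sum_comm]
    refine Finset.sum_congr rfl fun i _ => Finset.sum_congr rfl fun j _ => ?_
    first
      | ring1
      | (rw [real_inner_comm (A (b i)) (A (b j))]; ring1)
      | (rw [real_inner_comm (A (b j)) (A (b i))]; ring1)
  -- conformal → G = (S/k) • 1
  have hconf_to_G : (∀ v w : V₁, ⟪A v, A w⟫ = S / k * ⟪v, w⟫) →
      G = (S / k) • (1 : Matrix (Fin k) (Fin k) ℝ) := by
    intro hconf
    ext i j
    have h7 := hconf (b i) (b j)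
    rw [orthonormal_iff_ite.mp b.orthonormal i j] at h7
    simp only [hG, Matrix.of_apply, Matrix.smul_apply, Matrix.one_apply, h7]
    by_cases h : i = j <;> simp [h]
  -- eigenvalues all S/k → conformal
  have hEigConf : (∀ i, hGherm.eigenvalues i = S / k) →
      (∀ v w : V₁, ⟪A v, A w⟫ = S / k * ⟪v, w⟫) := by
    intro heig v w
    have hGc : G = (S / k) • (1 : Matrix (Fin k) (Fin k) ℝ) := by
      conv_lhs => rw [hGherm.spectral_theorem, Unitary.conjStarAlgAut_apply]
      have hdiag : Matrix.diagonal (RCLike.ofReal ∘ hGherm.eigenvalues) =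
          (S / k) • (1 : Matrix (Fin k) (Fin k) ℝ) := by
        rw [Matrix.smul_one_eq_diagonal]
        exact congrArg _ (funext fun i => by simp [heig i])
      rw [hdiag]
      rw [Matrix.mul_smul, Matrix.smul_mul, Matrix.mul_one,
        (Matrix.mem_unitaryGroup_iff).mp (Matrix.IsHermitian.eigenvectorUnitary hGherm).2]
    rw [key v w, hGc]
    have hentry : ∀ i j : Fin k, ((S / k) • (1 : Matrix (Fin k) (Fin k) ℝ)) i j =
        if i = j then S / k else 0 := by
      intro i j
      simp [Matrix.smul_apply, Matrix.one_apply, mul_ite]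
    simp only [hentry, mul_ite, mul_zero]
    simp only [Finset.sum_ite_eq, Finset.mem_univ, if_true]
    have hterm : ∀ i : Fin k, ⟪b i, v⟫ * ⟪b i, w⟫ * (S / k) =
        S / k * (⟪v, b i⟫ * ⟪b i, w⟫) := fun i => by
      rw [real_inner_comm (b i) v]; ring
    rw [Finset.sum_congr rfl fun i _ => hterm i, ← Finset.mul_sum,
      b.sum_inner_mul_inner]
  -- rewrite RHS
  have hRHS : (1 / Real.sqrt k) ^ k * Real.sqrt S ^ k = Real.sqrt ((S / k) ^ k) := by
    rw [← mul_pow]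
    have h1 : 1 / Real.sqrt k * Real.sqrt S = Real.sqrt (S / k) := by
      rw [one_div, ← Real.sqrt_inv, ← Real.sqrt_mul (by positivity)]
      congr 1
      field_simp
    rw [h1]
    have h2 : 0 ≤ Real.sqrt (S / k) ^ k := by positivity
    rw [← Real.sqrt_sq h2, ← pow_mul, mul_comm k 2, pow_mul, Real.sq_sqrt (by positivity)]
  rw [hRHS]
  constructor
  · exact Real.sqrt_le_sqrt amgm_le
  · rw [Real.sqrt_inj hDet0 (by positivity)]
    constructor
    · intro hdeteq
      exact hEigConf (amgm_iff.mp hdeteq)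
    · intro hconf
      have hGc := hconf_to_G hconf
      rw [hGc, Matrix.det_smul, Matrix.det_one, Fintype.card_fin, mul_one]
end

section
/- (First cousin principle, linear-algebra version.) Let α be an alternating k-form of comass at most one on a real inner product space V, and suppose the oriented k-plane spanned by an orthonormal family e₁, …, e_k satisfies α(e₁, …, e_k) = 1. If w ∈ V is orthogonal to the span of e₁, …, e_k, then α(e₁, …, e_{k-1}, w) = 0. -/
open scoped RealInnerProductSpace

/-- The first cousin principle (linear-algebra version): if `α` is an alternating
`(k+1)`-form of comass at most one, `e` is an orthonormal family calibrated by `α`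
(`α e = 1`), and `w` is orthogonal to all the `e i`, then `α(e₁,…,e_k,w) = 0`. -/
theorem stmt_1 {V : Type*} [NormedAddCommGroup V] [InnerProductSpace ℝ V] (k : ℕ)
    (α : V [⋀^Fin (k + 1)]→ₗ[ℝ] ℝ)
    (hcomass : ∀ v : Fin (k + 1) → V, Orthonormal ℝ v → |α v| ≤ 1)
    (e : Fin (k + 1) → V) (he : Orthonormal ℝ e) (hcal : α e = 1)
    (w : V) (hw : ∀ i, ⟪e i, w⟫ = 0) :
    α (Function.update e (Fin.last k) w) = 0 := by
  rcases eq_or_ne w 0 with rfl | hw0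
  · simp
  set l := Fin.last k with hl
  set w' : V := ‖w‖⁻¹ • w with hw'
  have hnw : ‖w‖ ≠ 0 := norm_ne_zero_iff.mpr hw0
  have hew' : ∀ i, ⟪e i, w'⟫ = 0 := fun i => by
    rw [hw', real_inner_smul_right, hw i, mul_zero]
  have hw'w' : ⟪w', w'⟫ = 1 := by
    have hw'norm : ‖w'‖ = 1 := by
      rw [hw', norm_smul]
      simp [abs_of_nonneg (norm_nonneg w), hnw]
    rw [real_inner_self_eq_norm_sq, hw'norm]; norm_num
  have hwrepr : w = ‖w‖ • w' := by
    rw [hw', smul_smul, mul_inv_cancel₀ hnw, one_smul]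
  clear_value w'
  set c := α (Function.update e l w') with hc
  set S := Real.sqrt (1 + c ^ 2) with hS
  have hS2 : S ^ 2 = 1 + c ^ 2 := Real.sq_sqrt (by positivity)
  have hSpos : 0 < S := Real.sqrt_pos.mpr (by positivity)
  clear_value S
  set u : V := (1 / S) • e l + (c / S) • w' with hu
  clear_value u
  set v : Fin (k + 1) → V := Function.update e l u with hv
  clear_value v
  have hii : ∀ i, ⟪e i, e i⟫ = 1 := fun i => by
    rw [real_inner_self_eq_norm_sq, he.1 i]; norm_num
  have hvon : Orthonormal ℝ v := by
    rw [orthonormal_iff_ite]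
    intro i j
    rcases eq_or_ne i l with rfl | hi <;> rcases eq_or_ne j l with rfl | hj
    · have h3 : ⟪w', e l⟫ = 0 := by rw [real_inner_comm]; exact hew' l
      simp only [hv, Function.update_self, if_pos rfl]
      rw [hu, inner_add_add_self]
      simp only [real_inner_smul_left, real_inner_smul_right, hii, hew', hw'w', h3, if_true]
      field_simp
      nlinarith [hS2]
    · have h1 : ⟪e l, e j⟫ = 0 := by rw [real_inner_comm]; exact he.2 hj
      have h2 : ⟪w', e j⟫ = 0 := by rw [real_inner_comm]; exact hew' j
      simp only [hv, Function.update_self, Function.update_of_ne hj,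
        if_neg (Ne.symm hj)]
      rw [hu, inner_add_left, real_inner_smul_left, real_inner_smul_left, h1, h2]
      ring
    · simp only [hv, Function.update_self, Function.update_of_ne hi, if_neg hi]
      rw [hu, inner_add_right, real_inner_smul_right, real_inner_smul_right,
        he.2 hi, hew']
      ring
    · simp only [hv, Function.update_of_ne hi, Function.update_of_ne hj]
      rcases eq_or_ne i j with rfl | hij
      · simp [hii i, he.1 i]
      · simp [if_neg hij, he.2 hij]
  have hαv : α v = S := by
    rw [hv, hu, α.map_update_add, α.map_update_smul, α.map_update_smul,
      Function.update_eq_self, hcal, ← hc]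
    simp only [smul_eq_mul]
    field_simp
    nlinarith [hS2]
  have hS1 : S ≤ 1 := by
    have := hcomass v hvon
    rw [hαv] at this
    exact (abs_le.mp this).2
  have hc0 : c = 0 := by
    nlinarith [hS2, sq_nonneg c]
  rw [hwrepr, α.map_update_smul, ← hc, hc0, smul_zero]
end

section
/- Let V be a real inner product space with an orthogonal direct sum decomposition V = Vᵥ ⊕ V_h with dim V_h = k, and let α be an alternating k-form on V that is purely horizontal (i.e., α vanishes whenever any argument lies in Vᵥ). Define P_α : Λ^{k-1} V → V by ⟨P_α(ξ), w⟩ = α(ξ ∧ w), and P_α^⊤ its adjoint. Then P_α ∘ P_α^⊤ = |α|² · π_h, where π_h : V → V_h is the orthogonal projection and |α| is the norm of α in Λᵏ V*. -/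
open scoped RealInnerProductSpace

/-- `P_α ∘ P_α^⊤ = |α|² π_h` for a purely horizontal `(m+1)`-form `α` on
`V = Vᵥ ⊕ Vᵥᗮ` with `dim Vᵥᗮ = m+1`. The exterior power `Λ^m V` is modelled by an
abstract inner product space `M` together with an alternating wedge map realizing the
induced inner product (Gram determinant) and spanning `M`; `P_α : M → V` raises the
last index of `α`; `|α|²` is computed as `α(e)²` on an orthonormal basis `e` of the
horizontal space (legitimate since `α` is horizontal of top horizontal degree). -/
theorem stmt_4 {V M : Type*} [NormedAddCommGroup V] [InnerProductSpace ℝ V]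
    [FiniteDimensional ℝ V] [NormedAddCommGroup M] [InnerProductSpace ℝ M]
    [FiniteDimensional ℝ M]
    (m : ℕ) (Vv : Submodule ℝ V) (hdim : Module.finrank ℝ Vvᗮ = m + 1)
    (α : V [⋀^Fin (m + 1)]→ₗ[ℝ] ℝ)
    (hhoriz : ∀ v : Fin (m + 1) → V, (∃ i, v i ∈ Vv) → α v = 0)
    (wedge : (Fin m → V) → M)
    (hspan : Submodule.span ℝ (Set.range wedge) = ⊤)
    (hinner : ∀ w w' : Fin m → V,
      ⟪wedge w, wedge w'⟫ = Matrix.det (Matrix.of fun i j => ⟪w i, w' j⟫))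
    (Pα : M →ₗ[ℝ] V)
    (hPα : ∀ (w : Fin m → V) (v : V), ⟪Pα (wedge w), v⟫ = α (Fin.snoc w v))
    (e : OrthonormalBasis (Fin (m + 1)) ℝ Vvᗮ) :
    Pα ∘ₗ LinearMap.adjoint Pα =
      (α fun i => (e i : V)) ^ 2 •
        (Vvᗮ.subtype ∘ₗ (Vvᗮ.orthogonalProjectionOnto : V →L[ℝ] Vvᗮ).toLinearMap) := by
  classical
  set c := α fun i => (e i : V) with hc
  -- orthonormality in V
  have horth : ∀ a b, ⟪(e a : V), (e b : V)⟫ = if a = b then (1:ℝ) else 0 := by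
    intro a b
    have := (orthonormal_iff_ite (𝕜 := ℝ)).mp e.orthonormal a b
    rw [← Submodule.coe_inner]
    exact this
  -- vanishing on vertical parts: α only sees the horizontal projection
  have hvert : ∀ v : Fin (m+1) → V,
      α v = α (fun j => ((Vvᗮ.orthogonalProjectionOnto (v j) : Vvᗮ) : V)) := by
    intro v
    set a : Fin (m+1) → V := fun j => ((Vvᗮ.orthogonalProjectionOnto (v j) : Vvᗮ) : V) with ha
    set b : Fin (m+1) → V := fun j => v j - a j with hbdef
    have hb : ∀ j, b j ∈ Vv := by
      intro j
      have h1 : v j - ((Vvᗮ.orthogonalProjectionOnto (v j) : Vvᗮ) : V) ∈ Vvᗮᗮ :=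
        Vvᗮ.sub_starProjection_mem_orthogonal (v j)
      rwa [Submodule.orthogonal_orthogonal] at h1
    have hab : a + b = v := by funext j; simp [a, b]
    have h2 : α v = α (a + b) := by rw [hab]
    rw [h2]
    have h3 := α.toMultilinearMap.map_add_univ a b
    have h4 : (α (a + b) : ℝ) = ∑ s : Finset (Fin (m+1)), α (s.piecewise a b) := h3
    rw [h4, Finset.sum_eq_single Finset.univ]
    · rw [Finset.piecewise_univ]
    · intro s _ hs
      obtain ⟨i, hi⟩ : ∃ i, i ∉ s := by
        by_contra h
        push_neg at h
        exact hs (Finset.eq_univ_iff_forall.mpr h)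
      apply hhoriz
      refine ⟨i, ?_⟩
      rw [Finset.piecewise_eq_of_notMem _ _ _ hi]
      exact hb i
    · simp
  -- α as a multiple of the determinant form
  have hαdet : ∀ v : Fin (m+1) → V,
      α v = c * Matrix.det (Matrix.of fun i j => ⟪(e i : V), v j⟫) := by
    intro v
    have hproj : ∀ i j, ⟪(e i : V), ((Vvᗮ.orthogonalProjectionOnto (v j) : Vvᗮ) : V)⟫
        = ⟪(e i : V), v j⟫ := by
      intro i j
      have h1 : v j - ((Vvᗮ.orthogonalProjectionOnto (v j) : Vvᗮ) : V) ∈ Vvᗮᗮ :=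
        Vvᗮ.sub_starProjection_mem_orthogonal (v j)
      have h2 : ⟪(e i : V), v j - ((Vvᗮ.orthogonalProjectionOnto (v j) : Vvᗮ) : V)⟫ = 0 :=
        (Submodule.mem_orthogonal Vvᗮ _).mp h1 _ (e i).2
      rw [inner_sub_right] at h2
      linarith
    rw [hvert v]
    set α' : Vvᗮ [⋀^Fin (m+1)]→ₗ[ℝ] ℝ := α.compLinearMap Vvᗮ.subtype with hα'
    have h1 : α (fun j => ((Vvᗮ.orthogonalProjectionOnto (v j) : Vvᗮ) : V))
        = α' (fun j => Vvᗮ.orthogonalProjectionOnto (v j)) := rfl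
    have hce : α' ⇑e.toBasis = c := by
      have : ⇑e.toBasis = ⇑e := e.coe_toBasis
      rw [this]
      rfl
    rw [h1, α'.eq_smul_basis_det e.toBasis]
    rw [AlternatingMap.smul_apply, hce, Module.Basis.det_apply, smul_eq_mul]
    congr 1
    congr 1
    ext i j
    rw [Module.Basis.toMatrix_apply, e.coe_toBasis_repr_apply, e.repr_apply_apply,
      Submodule.coe_inner, Matrix.of_apply]
    exact hproj i j
  -- extensionality in M via the spanning wedges
  have Mext : ∀ x y : M, (∀ w, ⟪x, wedge w⟫ = ⟪y, wedge w⟫) → x = y := by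
    intro x y h
    have hz : ∀ z : M, ⟪x - y, z⟫ = 0 := by
      intro z
      have hz : z ∈ Submodule.span ℝ (Set.range wedge) := hspan ▸ Submodule.mem_top
      induction hz using Submodule.span_induction with
      | mem z hz => obtain ⟨w, rfl⟩ := hz; rw [inner_sub_left, h w, sub_self]
      | zero => simp
      | add z₁ z₂ _ _ h1 h2 => rw [inner_add_right, h1, h2, add_zero]
      | smul r z _ h1 => rw [real_inner_smul_right, h1, mul_zero]
    have h0 := hz (x - y)
    rwa [inner_self_eq_zero, sub_eq_zero] at h0
  -- characterization of the adjoint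
  have hadj : ∀ (v : V) (w : Fin m → V),
      ⟪LinearMap.adjoint Pα v, wedge w⟫ = α (Fin.snoc w v) := by
    intro v w
    rw [LinearMap.adjoint_inner_left, real_inner_comm, hPα]
  -- the adjoint kills vertical vectors
  have hadjvert : ∀ v ∈ Vv, LinearMap.adjoint Pα v = 0 := by
    intro v hv
    apply Mext
    intro w
    rw [hadj, inner_zero_left]
    apply hhoriz
    exact ⟨Fin.last m, by rwa [Fin.snoc_last]⟩
  -- sub-determinant of basis vectors
  have hsub : ∀ i t : Fin (m+1),
      Matrix.det (Matrix.of fun i' j' : Fin m =>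
        ⟪(e (Fin.succAbove i i') : V), (e (Fin.succAbove t j') : V)⟫)
      = if i = t then (1:ℝ) else 0 := by
    intro i t
    by_cases hit : i = t
    · subst hit
      rw [if_pos rfl]
      have : (Matrix.of fun i' j' : Fin m =>
          ⟪(e (Fin.succAbove i i') : V), (e (Fin.succAbove i j') : V)⟫)
          = (1 : Matrix (Fin m) (Fin m) ℝ) := by
        ext i' j'
        rw [Matrix.of_apply, horth, Matrix.one_apply]
        simp [Fin.succAbove_right_inj]
      rw [this, Matrix.det_one]
    · rw [if_neg hit]
      obtain ⟨i', hi'⟩ := Fin.exists_succAbove_eq (Ne.symm hit : t ≠ i)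
      apply Matrix.det_eq_zero_of_row_eq_zero i'
      intro j'
      rw [Matrix.of_apply, hi', horth, if_neg (Fin.ne_succAbove t j')]
  -- determinant expansion 1: last argument a basis vector
  have det1 : ∀ (t : Fin (m+1)) (w : Fin m → V),
      Matrix.det (Matrix.of fun i j => ⟪(e i : V), (Fin.snoc w (e t : V) : Fin (m+1) → V) j⟫)
      = (-1)^((t:ℕ) + m) *
        Matrix.det (Matrix.of fun i j => ⟪(e (Fin.succAbove t i) : V), w j⟫) := by
    intro t w
    rw [Matrix.det_succ_column _ (Fin.last m)]
    rw [Finset.sum_eq_single t]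
    · have heq : ((Matrix.of fun i j =>
          ⟪(e i : V), (Fin.snoc w (e t : V) : Fin (m+1) → V) j⟫).submatrix
          t.succAbove (Fin.last m).succAbove)
          = Matrix.of fun i j => ⟪(e (Fin.succAbove t i) : V), w j⟫ := by
        ext i' j'
        rw [Matrix.submatrix_apply, Matrix.of_apply, Matrix.of_apply, Fin.succAbove_last,
          Fin.snoc_castSucc]
      rw [Matrix.of_apply, Fin.snoc_last, horth, if_pos rfl, Fin.val_last, mul_one, heq]
    · intro i _ hi
      rw [Matrix.of_apply, Fin.snoc_last, horth, if_neg hi, mul_zero, zero_mul]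
    · simp
  -- determinant expansion 2: first m arguments basis vectors (with t omitted)
  have det2 : ∀ (t : Fin (m+1)) (v' : V),
      Matrix.det (Matrix.of fun i j =>
        ⟪(e i : V), (Fin.snoc (fun j' => (e (Fin.succAbove t j') : V)) v' : Fin (m+1) → V) j⟫)
      = (-1)^((t:ℕ) + m) * ⟪(e t : V), v'⟫ := by
    intro t v'
    rw [Matrix.det_succ_column _ (Fin.last m)]
    rw [Finset.sum_eq_single t]
    · have hsubm : Matrix.det ((Matrix.of fun i j =>
          ⟪(e i : V), (Fin.snoc (fun j' => (e (Fin.succAbove t j') : V)) v' : Fin (m+1) → V) j⟫).submatrix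
          t.succAbove (Fin.last m).succAbove) = 1 := by
        have heq : ((Matrix.of fun i j =>
            ⟪(e i : V), (Fin.snoc (fun j' => (e (Fin.succAbove t j') : V)) v' : Fin (m+1) → V) j⟫).submatrix
            t.succAbove (Fin.last m).succAbove)
            = Matrix.of fun i' j' : Fin m =>
              ⟪(e (Fin.succAbove t i') : V), (e (Fin.succAbove t j') : V)⟫ := by
          ext i' j'
          rw [Matrix.submatrix_apply, Matrix.of_apply, Matrix.of_apply, Fin.succAbove_last,
            Fin.snoc_castSucc]
        rw [heq, hsub, if_pos rfl]
      rw [hsubm, mul_one, Matrix.of_apply, Fin.snoc_last, Fin.val_last]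
    · intro i _ hi
      have hsubm : Matrix.det ((Matrix.of fun i₀ j =>
          ⟪(e i₀ : V), (Fin.snoc (fun j' => (e (Fin.succAbove t j') : V)) v' : Fin (m+1) → V) j⟫).submatrix
          i.succAbove (Fin.last m).succAbove) = 0 := by
        have heq : ((Matrix.of fun i₀ j =>
            ⟪(e i₀ : V), (Fin.snoc (fun j' => (e (Fin.succAbove t j') : V)) v' : Fin (m+1) → V) j⟫).submatrix
            i.succAbove (Fin.last m).succAbove)
            = Matrix.of fun i' j' : Fin m =>
              ⟪(e (Fin.succAbove i i') : V), (e (Fin.succAbove t j') : V)⟫ := by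
          ext i' j'
          rw [Matrix.submatrix_apply, Matrix.of_apply, Matrix.of_apply, Fin.succAbove_last,
            Fin.snoc_castSucc]
        rw [heq, hsub, if_neg hi]
      rw [hsubm, mul_zero]
    · simp
  -- adjoint on basis vectors
  have hadjt : ∀ t : Fin (m+1), LinearMap.adjoint Pα (e t : V)
      = ((-1)^((t:ℕ) + m) * c) • wedge (fun j => (e (Fin.succAbove t j) : V)) := by
    intro t
    apply Mext
    intro w
    rw [hadj, hαdet, real_inner_smul_left, hinner, det1]
    ring
  -- the composite on basis vectors
  have hfinal : ∀ t : Fin (m+1),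
      Pα (LinearMap.adjoint Pα (e t : V)) = (c^2) • (e t : V) := by
    intro t
    rw [hadjt t, map_smul]
    apply ext_inner_right ℝ
    intro v'
    rw [real_inner_smul_left, hPα, hαdet, det2, real_inner_smul_left]
    have h1 : ((-1:ℝ))^((t:ℕ) + m) * (-1)^((t:ℕ) + m) = 1 := by
      rw [← pow_add]
      exact Even.neg_one_pow ⟨(t:ℕ) + m, rfl⟩
    linear_combination (c * c * ⟪(e t : V), v'⟫) * h1
  -- assemble
  apply LinearMap.ext
  intro v
  have hsplit : v = ((Vvᗮ.orthogonalProjectionOnto v : Vvᗮ) : V)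
      + (v - ((Vvᗮ.orthogonalProjectionOnto v : Vvᗮ) : V)) := by abel
  have hvmem : v - ((Vvᗮ.orthogonalProjectionOnto v : Vvᗮ) : V) ∈ Vv := by
    have h1 : v - ((Vvᗮ.orthogonalProjectionOnto v : Vvᗮ) : V) ∈ Vvᗮᗮ :=
      Vvᗮ.sub_starProjection_mem_orthogonal v
    rwa [Submodule.orthogonal_orthogonal] at h1
  have hadjv : LinearMap.adjoint Pα v
      = LinearMap.adjoint Pα ((Vvᗮ.orthogonalProjectionOnto v : Vvᗮ) : V) := by
    conv_lhs => rw [hsplit]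
    rw [map_add, hadjvert _ hvmem, add_zero]
  -- a linear-map identity on the horizontal subspace
  have hhor : ∀ x : Vvᗮ, Pα (LinearMap.adjoint Pα (x : V)) = (c^2) • (x : V) := by
    have hmaps : ((Pα ∘ₗ LinearMap.adjoint Pα) ∘ₗ Vvᗮ.subtype : Vvᗮ →ₗ[ℝ] V)
        = (c^2) • Vvᗮ.subtype := by
      apply e.toBasis.ext
      intro t
      have hbt : e.toBasis t = e t := congrFun e.coe_toBasis t
      simp only [LinearMap.comp_apply, Submodule.subtype_apply, LinearMap.smul_apply, hbt]
      exact hfinal t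
    intro x
    have hx := LinearMap.congr_fun hmaps x
    simpa using hx
  simp only [LinearMap.comp_apply, LinearMap.smul_apply, ContinuousLinearMap.coe_coe,
    Submodule.subtype_apply]
  rw [hadjv]
  exact hhor _
end

section
/- (Equivalence of Smith submersion formulations, linear algebra version.) Let V = Vᵥ ⊕ V_h be an orthogonal decomposition of an oriented n-dimensional inner product space with dim V_h = k, A : V → W a linear map onto an oriented k-dimensional inner product space with ker A = Vᵥ, and α an alternating (n−k)-form on V of comass at most one. Set λ = |A|/√k. Then the following are equivalent: (i) A* vol_W = λ^k (⋆α)^{(0,k)} and A* g_W = λ² h^{(0,2)}; (ii) α ∧ A* vol_W = λ^k vol_V. Here (⋆α)^{(0,k)} is the purely horizontal component of ⋆α and h^{(0,2)} is the horizontal part of the inner product. -/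
open scoped RealInnerProductSpace

/-- The wedge product of two real-valued alternating forms, via `domCoprod`
(the shuffle-sum convention) and reindexing `Fin m ⊕ Fin k ≃ Fin (m+k)`. -/
noncomputable def wedgeAlt {V : Type*} [AddCommGroup V] [Module ℝ V] {m k : ℕ}
    (a : V [⋀^Fin m]→ₗ[ℝ] ℝ) (b : V [⋀^Fin k]→ₗ[ℝ] ℝ) : V [⋀^Fin (m + k)]→ₗ[ℝ] ℝ :=
  ((TensorProduct.lid ℝ ℝ).toLinearMap.compAlternatingMap
    (a.domCoprod b)).domDomCongr finSumFinEquiv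

open Equiv in
lemma wedgeAlt_apply_vert {V : Type*} [AddCommGroup V] [Module ℝ V] {m k : ℕ}
    (a : V [⋀^Fin m]→ₗ[ℝ] ℝ) (b : V [⋀^Fin k]→ₗ[ℝ] ℝ) (v : Fin (m + k) → V)
    (hb : ∀ w : Fin k → V, (∃ j i, w j = v (Fin.castAdd k i)) → b w = 0) :
    wedgeAlt a b v = a (fun i => v (Fin.castAdd k i)) * b (fun j => v (Fin.natAdd m j)) := by
  classical
  set u : Fin m ⊕ Fin k → V := fun i => v (finSumFinEquiv i) with hu
  have key : (a.domCoprod b) u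
      = (a fun i => v (Fin.castAdd k i)) ⊗ₜ[ℝ] (b fun j => v (Fin.natAdd m j)) := by
    rw [AlternatingMap.domCoprod_apply, MultilinearMap.sum_apply]
    refine (Finset.sum_eq_single (Quotient.mk'' (1 : Perm (Fin m ⊕ Fin k))) ?_ ?_).trans ?_
    rotate_left 2
    · rw [AlternatingMap.domCoprod.summand_mk'']
      simp only [Equiv.Perm.sign_one, one_smul, MultilinearMap.domDomCongr_apply,
        MultilinearMap.domCoprod_apply, AlternatingMap.coe_multilinearMap, Equiv.Perm.coe_one,
        Function.comp_apply, id_eq]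
      have h1 : (fun i => u (Sum.inl i)) = fun i => v (Fin.castAdd k i) :=
        funext fun i => by simp [hu]
      have h2 : (fun j => u (Sum.inr j)) = fun j => v (Fin.natAdd m j) :=
        funext fun j => by simp [hu]
      rw [h1, h2]
    · intro σ _ hσ
      induction σ using Quotient.inductionOn' with
      | h π =>
        rw [AlternatingMap.domCoprod.summand_mk'']
        have hnm : ¬ Set.MapsTo π (Set.range Sum.inl) (Set.range Sum.inl) := by
          intro hmap
          apply hσ
          obtain ⟨⟨sl, sr⟩, hs⟩ := Equiv.Perm.mem_sumCongrHom_range_of_perm_mapsTo_inl hmap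
          apply Quotient.sound'
          rw [QuotientGroup.leftRel_apply, mul_one]
          exact inv_mem ⟨(sl, sr), hs⟩
        have hnm' : ¬ Set.MapsTo π (Set.range Sum.inr) (Set.range Sum.inr) := by
          rw [← Equiv.Perm.perm_mapsTo_inl_iff_mapsTo_inr]; exact hnm
        rw [Set.MapsTo] at hnm'
        push_neg at hnm'
        obtain ⟨x, hx1, hx2⟩ := hnm'
        obtain ⟨j, rfl⟩ := hx1
        obtain ⟨i, hi⟩ : ∃ i, π (Sum.inr j) = Sum.inl i := by
          rcases h : π (Sum.inr j) with i | j'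
          · exact ⟨i, rfl⟩
          · exact absurd ⟨j', h.symm⟩ hx2
        have hbz : b (fun j' => u (π (Sum.inr j'))) = 0 := by
          apply hb
          refine ⟨j, i, ?_⟩
          simp [hi, hu]
        simp only [MultilinearMap.smul_apply, MultilinearMap.domDomCongr_apply,
          MultilinearMap.domCoprod_apply, AlternatingMap.coe_multilinearMap,
          Function.comp_apply]
        rw [hbz, TensorProduct.tmul_zero, smul_zero]
    · intro h; simp at h
  have : wedgeAlt a b v = TensorProduct.lid ℝ ℝ ((a.domCoprod b) u) := rfl
  rw [this, key, TensorProduct.lid_tmul, smul_eq_mul, mul_comm]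


section Aux

lemma amgm_le {k : ℕ} (hk : 1 ≤ k) (μ : Fin k → ℝ) (h0 : ∀ i, 0 ≤ μ i) :
    ∏ i, μ i ≤ ((∑ i, μ i) / k) ^ k := by
  have hk0 : (k : ℝ) ≠ 0 := by positivity
  have hge := Real.geom_mean_le_arith_mean_weighted Finset.univ (fun _ => 1 / (k : ℝ)) μ
    (fun i _ => by positivity) (by simp [Finset.sum_const]; field_simp) (fun i _ => h0 i)
  have hsum : ∑ i, (1 / (k : ℝ)) * μ i = (∑ i, μ i) / k := by
    rw [← Finset.mul_sum]; ring
  rw [hsum] at hge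
  have h1 : ∏ i, μ i = (∏ i, μ i ^ (1 / (k : ℝ))) ^ k := by
    rw [← Finset.prod_pow]
    refine Finset.prod_congr rfl fun i _ => ?_
    rw [← Real.rpow_natCast (μ i ^ (1 / (k : ℝ))) k, ← Real.rpow_mul (h0 i),
      one_div, inv_mul_cancel₀ hk0, Real.rpow_one]
  rw [h1]
  exact pow_le_pow_left₀ (Finset.prod_nonneg fun i _ => Real.rpow_nonneg (h0 i) _) hge k

lemma amgm_all_eq {k : ℕ} (hk : 1 ≤ k) (μ : Fin k → ℝ) (h0 : ∀ i, 0 ≤ μ i) {c : ℝ}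
    (hc : 0 < c) (hsum : ∑ i, μ i = k * c) (hprod : c ^ k ≤ ∏ i, μ i) :
    ∀ i, μ i = c := by
  have hk0 : (k : ℝ) ≠ 0 := by positivity
  have hup : ∏ i, μ i ≤ c ^ k := by
    have := amgm_le hk μ h0
    rwa [hsum, mul_comm, mul_div_assoc, div_self hk0, mul_one] at this
  have hprodeq : ∏ i, μ i = c ^ k := le_antisymm hup hprod
  have hpos : ∀ i, 0 < μ i := by
    intro i
    rcases lt_or_eq_of_le (h0 i) with h | h
    · exact h
    · exfalso
      have : ∏ j, μ j = 0 := Finset.prod_eq_zero (Finset.mem_univ i) h.symm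
      rw [hprodeq] at this
      exact absurd this (by positivity)
  have hpair : ∀ i j, μ i = μ j := by
    intro i j
    by_contra hne
    have hij : i ≠ j := fun hc' => hne (by rw [hc'])
    set a : ℝ := (μ i + μ j) / 2 with ha
    set ν : Fin k → ℝ := Function.update (Function.update μ i a) j a with hν
    have hνval : ∀ l, ν l = if l = j then a else if l = i then a else μ l := by
      intro l
      by_cases hl : l = j
      · simp [hν, hl]
      · by_cases hl' : l = i <;> simp [hν, hl, hl', Function.update]
    have ha0 : 0 ≤ a := by
      rw [ha]; have := h0 i; have := h0 j; linarith
    have hν0 : ∀ l, 0 ≤ ν l := by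
      intro l; rw [hνval]; split_ifs <;> [exact ha0; exact ha0; exact h0 l]
    have hsν : ∑ l, ν l = ∑ l, μ l := by
      rw [hν, Finset.sum_update_of_mem (Finset.mem_univ j), Finset.sdiff_singleton_eq_erase,
        Finset.sum_update_of_mem (Finset.mem_erase.2 ⟨hij, Finset.mem_univ i⟩),
        Finset.sdiff_singleton_eq_erase,
        ← Finset.add_sum_erase _ μ (Finset.mem_univ j),
        ← Finset.add_sum_erase _ μ (Finset.mem_erase.2 ⟨hij, Finset.mem_univ i⟩)]
      ring
    have hpν : ∏ l, ν l = a * a * ∏ l ∈ (Finset.univ.erase j).erase i, μ l := by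
      rw [hν, ← Finset.mul_prod_erase _ _ (Finset.mem_univ j),
        ← Finset.mul_prod_erase _ _ (Finset.mem_erase.2 ⟨hij, Finset.mem_univ i⟩)]
      have e1 : Function.update (Function.update μ i a) j a j = a := by simp
      have e2 : Function.update (Function.update μ i a) j a i = a := by
        simp [Function.update, hij]
      rw [e1, e2]
      have : ∀ l ∈ (Finset.univ.erase j).erase i,
          Function.update (Function.update μ i a) j a l = μ l := by
        intro l hl
        rw [Finset.mem_erase, Finset.mem_erase] at hl
        simp [Function.update, hl.1, hl.2.1]
      rw [Finset.prod_congr rfl this]; ring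
    have hpμ : ∏ l, μ l = μ i * μ j * ∏ l ∈ (Finset.univ.erase j).erase i, μ l := by
      rw [← Finset.mul_prod_erase _ _ (Finset.mem_univ j),
        ← Finset.mul_prod_erase _ _ (Finset.mem_erase.2 ⟨hij, Finset.mem_univ i⟩)]
      ring
    have hP : 0 < ∏ l ∈ (Finset.univ.erase j).erase i, μ l :=
      Finset.prod_pos fun l _ => hpos l
    have hupν : ∏ l, ν l ≤ c ^ k := by
      have := amgm_le hk ν hν0
      rwa [hsν, hsum, mul_comm, mul_div_assoc, div_self hk0, mul_one] at this
    have hlt : μ i * μ j < a * a := by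
      have hsub : μ i - μ j ≠ 0 := sub_ne_zero.mpr hne
      have h4 : 0 < (μ i - μ j) ^ 2 := by positivity
      rw [ha]; nlinarith [h4]
    rw [hpν] at hupν
    rw [hpμ] at hprodeq
    nlinarith
  intro i
  have hsi : ∑ l, μ l = k * μ i := by
    rw [Finset.sum_congr rfl fun l _ => hpair l i]
    simp [Finset.sum_const, Finset.card_univ, mul_comm]
  have h3 : (k : ℝ) * c = (k : ℝ) * μ i := by rw [← hsum, hsi]
  exact (mul_left_cancel₀ hk0 h3).symm


noncomputable def onbFam {V : Type*} [NormedAddCommGroup V] [InnerProductSpace ℝ V]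
    [FiniteDimensional ℝ V] {n : ℕ} [Nonempty (Fin n)] {e : Fin n → V}
    (he : Orthonormal ℝ e) (hcard : Module.finrank ℝ V = n) : OrthonormalBasis (Fin n) ℝ V :=
  (basisOfOrthonormalOfCardEqFinrank he (by simp [hcard])).toOrthonormalBasis
    (by rwa [coe_basisOfOrthonormalOfCardEqFinrank])

@[simp] lemma onbFam_coe {V : Type*} [NormedAddCommGroup V] [InnerProductSpace ℝ V]
    [FiniteDimensional ℝ V] {n : ℕ} [Nonempty (Fin n)] {e : Fin n → V}
    (he : Orthonormal ℝ e) (hcard : Module.finrank ℝ V = n) :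
    ⇑(onbFam he hcard) = e := by
  rw [onbFam, Module.Basis.coe_toOrthonormalBasis, coe_basisOfOrthonormalOfCardEqFinrank]

@[simp] lemma onbFam_toBasis_coe {V : Type*} [NormedAddCommGroup V] [InnerProductSpace ℝ V]
    [FiniteDimensional ℝ V] {n : ℕ} [Nonempty (Fin n)] {e : Fin n → V}
    (he : Orthonormal ℝ e) (hcard : Module.finrank ℝ V = n) :
    ⇑(onbFam he hcard).toBasis = e := by
  rw [OrthonormalBasis.coe_toBasis, onbFam_coe]

lemma orientation_flip {V : Type*} [AddCommGroup V] [Module ℝ V] {n : ℕ} [Nonempty (Fin n)]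
    (B B' : Module.Basis (Fin n) ℝ V) (i0 : Fin n)
    (hf : ∀ i, B' i = if i = i0 then -(B i) else B i) :
    B'.orientation = -B.orientation := by
  have hdet : B.det ⇑B' = -1 := by
    have hfun : ⇑B' = Function.update ⇑B i0 (-(B i0)) := by
      funext i
      by_cases hi : i = i0
      · subst hi; simp [hf]
      · simp [hf, hi, Function.update, dif_neg hi]
    rw [hfun, AlternatingMap.map_update_neg, Function.update_eq_self, B.det_self]
  rcases B.orientation_eq_or_eq_neg B'.orientation with heq | heq
  · exfalso
    replace heq := heq.symm
    rw [Module.Basis.orientation_eq_iff_det_pos] at heq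
    rw [hdet] at heq
    linarith
  · exact heq

lemma orthonormal_append {V : Type*} [NormedAddCommGroup V] [InnerProductSpace ℝ V] {m k : ℕ}
    {K : Submodule ℝ V} {u : Fin m → V} {w : Fin k → V}
    (hu : Orthonormal ℝ u) (hw : Orthonormal ℝ w)
    (humem : ∀ i, u i ∈ K) (hwmem : ∀ j, w j ∈ Kᗮ) :
    Orthonormal ℝ (Fin.append u w) := by
  have hcross : ∀ i j, ⟪u i, w j⟫ = 0 := fun i j =>
    (Submodule.mem_orthogonal K (w j)).1 (hwmem j) (u i) (humem i)
  rw [orthonormal_iff_ite] at hu hw ⊢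
  intro i j
  refine Fin.addCases (fun i' => ?_) (fun i' => ?_) i <;>
    refine Fin.addCases (fun j' => ?_) (fun j' => ?_) j
  · rw [Fin.append_left, Fin.append_left]
    rw [hu i' j']
    congr 1
    simp [Fin.ext_iff]
  · rw [Fin.append_left, Fin.append_right, hcross i' j', if_neg]
    intro hcon
    have := congrArg Fin.val hcon
    simp only [Fin.coe_castAdd, Fin.coe_natAdd] at this
    omega
  · rw [Fin.append_right, Fin.append_left]
    rw [real_inner_comm, hcross j' i', if_neg]
    intro hcon
    have := congrArg Fin.val hcon
    simp only [Fin.coe_castAdd, Fin.coe_natAdd] at this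
    omega
  · rw [Fin.append_right, Fin.append_right, hw i' j']
    congr 1
    simp [Fin.ext_iff]

/-- Equivalence of the two formulations of the Smith submersion equation, linear
algebra version. `V = Vᵥ ⊕ Vᵥᗮ` with `dim V = m + k`, `dim Vᵥᗮ = k`; `A : V → W`
onto the oriented `k`-dimensional space `W` with `ker A = Vᵥ`; `α` an `m`-form of
comass at most one; `λ = |A|/√k` (Hilbert–Schmidt norm); `sα` is the Hodge star `⋆α`,
characterized on oriented orthonormal bases adapted as (first `m`, last `k`) slots.
Then: (i) `A^* vol_W = λ^k (⋆α)^{(0,k)}` (tested on horizontal tuples, where the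
`(0,k)` part of `⋆α` agrees with `⋆α`) and `A^* g_W = λ² h^{(0,2)}` (tested on
horizontal vectors) holds iff (ii) `α ∧ A^* vol_W = λ^k vol_V`. -/
theorem stmt_9 {V W : Type*} [NormedAddCommGroup V] [InnerProductSpace ℝ V]
    [FiniteDimensional ℝ V] [NormedAddCommGroup W] [InnerProductSpace ℝ W]
    [FiniteDimensional ℝ W]
    (m k : ℕ) (hk : 1 ≤ k)
    [Fact (Module.finrank ℝ V = m + k)] [Fact (Module.finrank ℝ W = k)]
    (oV : Orientation ℝ V (Fin (m + k))) (oW : Orientation ℝ W (Fin k))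
    (Vv : Submodule ℝ V) (hVh : Module.finrank ℝ Vvᗮ = k)
    (A : V →ₗ[ℝ] W) (hker : LinearMap.ker A = Vv) (hA : A ≠ 0)
    (α : V [⋀^Fin m]→ₗ[ℝ] ℝ)
    (hcomass : ∀ v : Fin m → V, Orthonormal ℝ v → |α v| ≤ 1)
    (sα : V [⋀^Fin k]→ₗ[ℝ] ℝ)
    (hstar : ∀ b : OrthonormalBasis (Fin (m + k)) ℝ V, b.toBasis.orientation = oV →
      (sα fun i => b (Fin.natAdd m i)) = α fun i => b (Fin.castAdd k i))
    (lam : ℝ)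
    (hlam : lam = Real.sqrt (LinearMap.trace ℝ V (LinearMap.adjoint A ∘ₗ A)) / Real.sqrt k) :
    ((∀ f : Fin k → V, (∀ i, f i ∈ Vvᗮ) →
        oW.volumeForm (fun i => A (f i)) = lam ^ k * sα f) ∧
      (∀ v w : V, v ∈ Vvᗮ → w ∈ Vvᗮ → ⟪A v, A w⟫ = lam ^ 2 * ⟪v, w⟫)) ↔
    wedgeAlt α (oW.volumeForm.compLinearMap A) = lam ^ k • oV.volumeForm := by
  classical
  have hfV : Module.finrank ℝ V = m + k := Fact.out
  have hfW : Module.finrank ℝ W = k := Fact.out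
  have hk0 : 0 < k := hk
  haveI : Nonempty (Fin k) := ⟨⟨0, hk0⟩⟩
  haveI : Nonempty (Fin (m + k)) := ⟨⟨0, by omega⟩⟩
  have hVv : Module.finrank ℝ Vv = m := by
    have h1 := Submodule.finrank_add_finrank_orthogonal (K := Vv)
    rw [hVh, hfV] at h1; omega
  -- vertical orthonormal family
  set bv : Fin m → V := fun i => (((stdOrthonormalBasis ℝ Vv).reindex (finCongr hVv)) i : V)
    with hbvdef
  have hbv_mem : ∀ i, bv i ∈ Vv := fun i => Submodule.coe_mem _
  have hbv_on : Orthonormal ℝ bv :=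
    (((stdOrthonormalBasis ℝ Vv).reindex (finCongr hVv)).orthonormal).comp_linearIsometry
      Vv.subtypeₗᵢ
  -- the symmetric operator A† A and its restriction to the horizontal space
  set T : V →ₗ[ℝ] V := LinearMap.adjoint A ∘ₗ A with hT
  have hTapp : ∀ v, T v = LinearMap.adjoint A (A v) := fun v => rfl
  have hTinner : ∀ v w : V, ⟪T v, w⟫ = ⟪A v, A w⟫ := by
    intro v w
    rw [hTapp, LinearMap.adjoint_inner_left]
  have hTsym : T.IsSymmetric := by
    intro v w
    rw [hTinner]
    rw [hTapp, LinearMap.adjoint_inner_right]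
  have hAker : ∀ v ∈ Vv, A v = 0 := by
    intro v hv
    rw [← LinearMap.mem_ker, hker]; exact hv
  have hTmap : ∀ v ∈ Vvᗮ, T v ∈ Vvᗮ := by
    intro v _
    rw [Submodule.mem_orthogonal]
    intro u hu
    rw [real_inner_comm, hTinner, hAker u hu, inner_zero_right]
  set Tres : ↥Vvᗮ →ₗ[ℝ] ↥Vvᗮ := T.restrict hTmap with hTres
  have hTressym : Tres.IsSymmetric := hTsym.restrict_invariant hTmap
  set eigb : OrthonormalBasis (Fin k) ℝ ↥Vvᗮ := hTressym.eigenvectorBasis hVh with heigb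
  set μ : Fin k → ℝ := hTressym.eigenvalues hVh with hμ
  set ch : Fin k → V := fun j => ((eigb j : ↥Vvᗮ) : V) with hch
  have hch_mem : ∀ j, ch j ∈ Vvᗮ := fun j => Submodule.coe_mem _
  have hch_on : Orthonormal ℝ ch := eigb.orthonormal.comp_linearIsometry Vvᗮ.subtypeₗᵢ
  have heig : ∀ i, T (ch i) = μ i • ch i := by
    intro i
    have h1 : Tres (eigb i) = μ i • eigb i :=
      Module.End.mem_eigenspace_iff.mp (hTressym.hasEigenvector_eigenvectorBasis hVh i).1
    have h2 := congrArg (Subtype.val) h1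
    rwa [LinearMap.restrict_apply] at h2
  have hAch : ∀ i j, ⟪A (ch i), A (ch j)⟫ = μ i * (if i = j then 1 else 0) := by
    intro i j
    rw [← hTinner, heig, real_inner_smul_left]
    congr 1
    exact orthonormal_iff_ite.mp hch_on i j
  have hμnn : ∀ i, 0 ≤ μ i := by
    intro i
    have h5 := hAch i i
    rw [if_pos rfl, mul_one] at h5
    rw [← h5]
    exact real_inner_self_nonneg
  -- the adapted orthonormal basis
  set e : Fin (m + k) → V := Fin.append bv ch with he
  have he_on : Orthonormal ℝ e := orthonormal_append hbv_on hch_on hbv_mem hch_mem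
  set eb : OrthonormalBasis (Fin (m + k)) ℝ V := onbFam he_on hfV with heb
  have hebc : ⇑eb = e := by rw [heb, onbFam_coe]
  have hebB : ⇑eb.toBasis = e := by rw [OrthonormalBasis.coe_toBasis, hebc]
  set δ : ℝ := oV.volumeForm e with hδdef
  have hδ : |δ| = 1 := by
    rw [hδdef, ← hebc]
    exact oV.abs_volumeForm_apply_of_orthonormal eb
  -- the trace of T as a sum of eigenvalues
  have htr : LinearMap.trace ℝ V T = ∑ j, μ j := by
    rw [LinearMap.trace_eq_matrix_trace ℝ eb.toBasis, Matrix.trace]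
    have hdiag : ∀ i, (LinearMap.toMatrix eb.toBasis eb.toBasis T).diag i
        = ⟪A (e i), A (e i)⟫ := by
      intro i
      rw [Matrix.diag_apply, LinearMap.toMatrix_apply,
        OrthonormalBasis.coe_toBasis_repr_apply, OrthonormalBasis.repr_apply_apply, hebc, hebB,
        real_inner_comm, hTinner]
    rw [Finset.sum_congr rfl fun i _ => hdiag i, Fin.sum_univ_add]
    have hv0 : ∀ i : Fin m, ⟪A (e (Fin.castAdd k i)), A (e (Fin.castAdd k i))⟫ = 0 := by
      intro i
      rw [he, Fin.append_left, hAker _ (hbv_mem i), inner_zero_left]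
    have hh0 : ∀ j : Fin k, ⟪A (e (Fin.natAdd m j)), A (e (Fin.natAdd m j))⟫ = μ j := by
      intro j
      rw [he, Fin.append_right]
      have h5 := hAch j j
      rwa [if_pos rfl, mul_one] at h5
    rw [Finset.sum_congr rfl fun i _ => hv0 i, Finset.sum_congr rfl fun j _ => hh0 j]
    simp
  have hμsum : ∑ j, μ j = (k : ℝ) * lam ^ 2 := by
    have htrnn : 0 ≤ LinearMap.trace ℝ V T := by
      rw [htr]; exact Finset.sum_nonneg fun j _ => hμnn j
    rw [hlam, div_pow, Real.sq_sqrt htrnn, Real.sq_sqrt (Nat.cast_nonneg k), htr]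
    field_simp
  have hlampos : 0 < lam := by
    have htrpos : 0 < LinearMap.trace ℝ V T := by
      rcases lt_or_eq_of_le (by rw [htr]; exact Finset.sum_nonneg fun j _ => hμnn j :
        (0:ℝ) ≤ LinearMap.trace ℝ V T) with h1 | h1
      · exact h1
      · exfalso
        apply hA
        have hμ0 : ∀ j, μ j = 0 := by
          intro j
          have hsum0 : ∑ j, μ j = 0 := by rw [← htr, ← h1]
          have := (Finset.sum_eq_zero_iff_of_nonneg (fun j _ => hμnn j)).mp hsum0
          exact this j (Finset.mem_univ j)
        apply eb.toBasis.ext (f₂ := 0)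
        intro i
        rw [hebB, LinearMap.zero_apply]
        refine Fin.addCases (fun i' => ?_) (fun j' => ?_) i
        · rw [he, Fin.append_left]; exact hAker _ (hbv_mem i')
        · rw [he, Fin.append_right]
          have h5 := hAch j' j'
          rw [if_pos rfl, mul_one, hμ0 j'] at h5
          exact inner_self_eq_zero.mp h5
    rw [hlam]
    have h6 : 0 < Real.sqrt (k:ℝ) := Real.sqrt_pos.mpr (by positivity)
    have h7 : 0 < Real.sqrt (LinearMap.trace ℝ V T) := Real.sqrt_pos.mpr htrpos
    positivity
  -- ⋆α evaluated on the horizontal eigenbasis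
  have hC : sα ch = α bv * δ := by
    rcases eb.toBasis.orientation_eq_or_eq_neg oV with hor | hor
    · -- oriented case
      have hst := hstar eb hor.symm
      have h1 : (fun i => eb (Fin.natAdd m i)) = ch := by
        funext j; rw [hebc, he, Fin.append_right]
      have h2 : (fun i => eb (Fin.castAdd k i)) = bv := by
        funext i; rw [hebc, he, Fin.append_left]
      rw [h1, h2] at hst
      have hδ1 : δ = 1 := by
        rw [hδdef, oV.volumeForm_robust eb hor.symm, ← hebB, eb.toBasis.det_self]
      rw [hδ1, mul_one, hst]
    · -- anti-oriented case: flip one horizontal vector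
      set j0 : Fin k := ⟨0, hk0⟩ with hj0
      set p : Fin (m + k) := Fin.natAdd m j0 with hp
      have hpval : (p : ℕ) = m := by rw [hp]; simp [hj0]
      have hj0val : (j0 : ℕ) = 0 := by rw [hj0]
      set ε : Fin (m + k) → ℝ := fun i => if i = p then -1 else 1 with hε
      set e' : Fin (m + k) → V := fun i => ε i • e i with he'
      have hεsq : ∀ i, ε i * ε i = 1 := by
        intro i; simp only [hε]; by_cases hi : i = p <;> simp [hi]
      have he'_on : Orthonormal ℝ e' := by
        rw [orthonormal_iff_ite] at he_on ⊢
        intro i j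
        simp only [he', real_inner_smul_left, real_inner_smul_right]
        rw [he_on i j]
        by_cases hij : i = j
        · subst hij; rw [if_pos rfl, mul_one, hεsq]
        · rw [if_neg hij]; ring
      set eb' : OrthonormalBasis (Fin (m + k)) ℝ V := onbFam he'_on hfV with heb'
      have heb'c : ⇑eb' = e' := by rw [heb', onbFam_coe]
      have heb'B : ⇑eb'.toBasis = e' := by rw [OrthonormalBasis.coe_toBasis, heb'c]
      have hflip : eb'.toBasis.orientation = -eb.toBasis.orientation := by
        apply orientation_flip eb.toBasis eb'.toBasis p
        intro i
        have h8 : eb'.toBasis i = e' i := by rw [heb'B]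
        have h8' : eb.toBasis i = e i := by rw [hebB]
        rw [h8, h8']
        simp only [he', hε]
        by_cases hi : i = p <;> simp [hi]
      have hor' : eb'.toBasis.orientation = oV := by rw [hflip]; exact hor.symm
      have hst := hstar eb' hor'
      set c : Fin k → ℝ := fun j => if j = j0 then -1 else 1 with hc
      have h1 : (fun i => eb' (Fin.natAdd m i)) = fun j => c j • ch j := by
        funext j
        simp only [heb'c, he', he, Fin.append_right]
        congr 1
        simp only [hε, hc]
        by_cases hj : j = j0
        · rw [if_pos (by rw [hj, ← hp]), if_pos hj]
        · rw [if_neg, if_neg hj]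
          intro hcon
          have h9 := congrArg Fin.val hcon
          simp only [Fin.coe_natAdd, hpval] at h9
          apply hj
          apply Fin.ext
          rw [hj0val]
          omega
      have h2 : (fun i => eb' (Fin.castAdd k i)) = bv := by
        funext i
        simp only [heb'c, he', hε]
        rw [if_neg, one_smul, he, Fin.append_left]
        intro hcon
        have h9 := congrArg Fin.val hcon
        simp only [Fin.coe_castAdd, hpval] at h9
        have := i.isLt
        omega
      rw [h1, h2] at hst
      have hprodc : ∏ j, c j = -1 := by
        rw [Finset.prod_eq_single j0 (fun b _ hb => by simp only [hc]; rw [if_neg hb])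
          (fun hcon => absurd (Finset.mem_univ j0) hcon)]
        simp [hc]
      have hsmul : sα (fun j => c j • ch j) = (∏ j, c j) • sα ch :=
        sα.toMultilinearMap.map_smul_univ c ch
      rw [hsmul, hprodc] at hst
      have hδm1 : δ = -1 := by
        rw [hδdef, oV.volumeForm_robust eb' hor']
        have he2 : e = fun i => ε i • e' i := by
          funext i
          simp only [he']
          rw [smul_smul, hεsq, one_smul]
        rw [he2]
        have h7 : eb'.toBasis.det (fun i => ε i • e' i) = (∏ i, ε i) • eb'.toBasis.det e' :=
          eb'.toBasis.det.toMultilinearMap.map_smul_univ ε e'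
        rw [h7, ← heb'B, eb'.toBasis.det_self]
        have hprodε : ∏ i, ε i = -1 := by
          rw [Finset.prod_eq_single p (fun b _ hb => by simp only [hε]; rw [if_neg hb])
            (fun hcon => absurd (Finset.mem_univ p) hcon)]
          simp [hε]
        rw [hprodε]; norm_num
      rw [hδm1]
      rw [neg_one_smul] at hst
      linarith [hst]
  -- evaluation on the adapted eigenbasis and subspace determinants
  have hP1 : ∀ g : Fin k → ↥Vvᗮ, sα (fun j => (g j : V)) = sα ch * eigb.toBasis.det g := by
    intro g
    have h1 := (sα.compLinearMap Vvᗮ.subtype).eq_smul_basis_det eigb.toBasis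
    have h2 := DFunLike.congr_fun h1 g
    simp only [AlternatingMap.compLinearMap_apply, AlternatingMap.smul_apply,
      Submodule.coe_subtype, smul_eq_mul] at h2
    have h3 : (fun i => ((eigb.toBasis i : ↥Vvᗮ) : V)) = ch := by
      funext i
      have h4 : eigb.toBasis i = eigb i := by rw [OrthonormalBasis.coe_toBasis]
      rw [h4, hch]
    rw [h3] at h2
    exact h2
  have hP2 : ∀ (f : Fin k → V) (hf : ∀ j, f j ∈ Vvᗮ),
      oV.volumeForm (Fin.append bv f)
        = δ * eigb.toBasis.det (fun j => (⟨f j, hf j⟩ : ↥Vvᗮ)) := by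
    intro f hf
    have h1 := oV.volumeForm.eq_smul_basis_det eb.toBasis
    have h2 := DFunLike.congr_fun h1 (Fin.append bv f)
    simp only [AlternatingMap.smul_apply, smul_eq_mul] at h2
    have hδ2 : oV.volumeForm ⇑eb.toBasis = δ := by rw [hebB, hδdef]
    rw [hδ2] at h2
    rw [h2]
    congr 1
    rw [Module.Basis.det_apply, Module.Basis.det_apply, ← Matrix.det_submatrix_equiv_self finSumFinEquiv]
    have hmat : ((eb.toBasis.toMatrix (Fin.append bv f)).submatrix finSumFinEquiv finSumFinEquiv)
        = Matrix.fromBlocks 1 0 0 (eigb.toBasis.toMatrix (fun j => (⟨f j, hf j⟩ : ↥Vvᗮ))) := by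
      ext i j
      rcases i with i | i <;> rcases j with j | j <;>
        simp only [Matrix.submatrix_apply, finSumFinEquiv_apply_left, finSumFinEquiv_apply_right,
          Matrix.fromBlocks_apply₁₁, Matrix.fromBlocks_apply₁₂, Matrix.fromBlocks_apply₂₁,
          Matrix.fromBlocks_apply₂₂, Module.Basis.toMatrix_apply]
      · -- top-left block : identity
        rw [Fin.append_left]
        have hbj : bv j = eb.toBasis (Fin.castAdd k j) := by
          have := congrFun hebB (Fin.castAdd k j)
          rw [this, he, Fin.append_left]
        rw [hbj, Module.Basis.repr_self, Finsupp.single_apply, Matrix.one_apply]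
        by_cases hij : i = j
        · subst hij; rw [if_pos rfl, if_pos rfl]
        · rw [if_neg (fun hcon => hij (by
            have h9 := congrArg Fin.val hcon
            simp only [Fin.coe_castAdd] at h9
            exact Fin.ext h9.symm)), if_neg hij]
      · -- top-right block : zero
        rw [Fin.append_right, OrthonormalBasis.coe_toBasis_repr_apply,
          OrthonormalBasis.repr_apply_apply, hebc, he, Fin.append_left, Matrix.zero_apply]
        exact (Submodule.mem_orthogonal Vv (f j)).1 (hf j) (bv i) (hbv_mem i)
      · -- bottom-left block : zero
        rw [Fin.append_left]
        have hbj : bv j = eb.toBasis (Fin.castAdd k j) := by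
          have := congrFun hebB (Fin.castAdd k j)
          rw [this, he, Fin.append_left]
        rw [hbj, Module.Basis.repr_self, Finsupp.single_apply, Matrix.zero_apply, if_neg]
        intro hcon
        have h9 := congrArg Fin.val hcon
        simp only [Fin.coe_castAdd, Fin.coe_natAdd] at h9
        have := j.isLt
        omega
      · -- bottom-right block
        rw [Fin.append_right, OrthonormalBasis.coe_toBasis_repr_apply,
          OrthonormalBasis.repr_apply_apply, hebc, he, Fin.append_right,
          OrthonormalBasis.coe_toBasis_repr_apply, OrthonormalBasis.repr_apply_apply]
        rfl
    rw [hmat, Matrix.det_fromBlocks_zero₂₁, Matrix.det_one, one_mul, ← Module.Basis.det_apply]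
  constructor
  · -- (i) → (ii)
    rintro ⟨hi1, hi2⟩
    have hvolAch : oW.volumeForm (fun j => A (ch j)) = lam ^ k * (α bv * δ) := by
      rw [hi1 ch hch_mem, hC]
    have habs : |oW.volumeForm (fun j => A (ch j))| = lam ^ k := by
      set w : Fin k → W := fun j => lam⁻¹ • A (ch j) with hwdef
      have hw_on : Orthonormal ℝ w := by
        rw [orthonormal_iff_ite]
        intro i j
        simp only [hwdef, real_inner_smul_left, real_inner_smul_right]
        rw [hi2 (ch i) (ch j) (hch_mem i) (hch_mem j)]
        have h5 := orthonormal_iff_ite.mp hch_on i j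
        rw [h5]
        by_cases hij : i = j
        · rw [if_pos hij]
          field_simp [hlampos.ne']
        · rw [if_neg hij]
          ring
      set wb : OrthonormalBasis (Fin k) ℝ W := onbFam hw_on hfW with hwb
      have hwbc : ⇑wb = w := by rw [hwb, onbFam_coe]
      have h6 : (fun j => A (ch j)) = fun j => lam • w j := by
        funext j
        rw [hwdef, smul_inv_smul₀ hlampos.ne']
      have h7 : oW.volumeForm (fun j => A (ch j)) = (∏ _j : Fin k, lam) • oW.volumeForm w := by
        rw [h6]
        exact oW.volumeForm.toMultilinearMap.map_smul_univ (fun _ => lam) w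
      rw [h7, Finset.prod_const, Finset.card_univ, Fintype.card_fin, smul_eq_mul, abs_mul,
        abs_of_pos (pow_pos hlampos k), ← hwbc,
        oW.abs_volumeForm_apply_of_orthonormal wb, mul_one]
    have hαabs : |α bv| = 1 := by
      rw [hvolAch, abs_mul, abs_mul, hδ, mul_one, abs_of_pos (pow_pos hlampos k)] at habs
      have hk' : lam ^ k ≠ 0 := (pow_pos hlampos k).ne'
      field_simp at habs
      exact habs
    have hα2 : α bv * α bv = 1 := by
      rw [← abs_mul_abs_self (α bv), hαabs, one_mul]
    have hwedge_e : wedgeAlt α (oW.volumeForm.compLinearMap A) e = lam ^ k * δ := by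
      have hkey := wedgeAlt_apply_vert α (oW.volumeForm.compLinearMap A) e (by
        intro w0 hw0
        obtain ⟨j, i, hji⟩ := hw0
        rw [AlternatingMap.compLinearMap_apply]
        apply (oW.volumeForm).map_coord_zero j
        rw [hji, he, Fin.append_left]
        exact hAker _ (hbv_mem i))
      have h2 : (fun i => e (Fin.castAdd k i)) = bv := by
        funext i; rw [he, Fin.append_left]
      have h3 : (fun j => e (Fin.natAdd m j)) = ch := by
        funext j; rw [he, Fin.append_right]
      rw [h2, h3] at hkey
      rw [hkey, AlternatingMap.compLinearMap_apply]
      have h4 : (fun i => A (ch i)) = fun j => A (ch j) := rfl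
      rw [h4, hvolAch]
      linear_combination (lam ^ k * δ) * hα2
    apply Module.Basis.ext_alternating eb.toBasis
    intro v hv
    have hbij : Function.Bijective v := (Finite.injective_iff_bijective).mp hv
    set σ : Equiv.Perm (Fin (m + k)) := Equiv.ofBijective v hbij with hσ
    have hvσ : (fun i => eb.toBasis (v i)) = e ∘ σ := by
      funext i
      have := congrFun hebB (v i)
      rw [this]
      rfl
    rw [hvσ, AlternatingMap.map_perm, AlternatingMap.smul_apply, AlternatingMap.map_perm,
      hwedge_e]
    rcases Int.units_eq_one_or (Equiv.Perm.sign σ) with hs | hs <;>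
      rw [hs] <;> simp [← hδdef] <;> ring
  · -- (ii) → (i)
    intro hw
    have hE : ∀ f : Fin k → V,
        α bv * oW.volumeForm (fun j => A (f j)) = lam ^ k * oV.volumeForm (Fin.append bv f) := by
      intro f
      have h1 := DFunLike.congr_fun hw (Fin.append bv f)
      have hkey := wedgeAlt_apply_vert α (oW.volumeForm.compLinearMap A) (Fin.append bv f) (by
        intro w0 hw0
        obtain ⟨j, i, hji⟩ := hw0
        rw [AlternatingMap.compLinearMap_apply]
        apply (oW.volumeForm).map_coord_zero j
        rw [hji, Fin.append_left]
        exact hAker _ (hbv_mem i))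
      rw [hkey] at h1
      have h2 : (fun i => Fin.append bv f (Fin.castAdd k i)) = bv := by
        funext i; rw [Fin.append_left]
      have h3 : (fun j => Fin.append bv f (Fin.natAdd m j)) = f := by
        funext j; rw [Fin.append_right]
      rw [h2, h3, AlternatingMap.smul_apply, smul_eq_mul, AlternatingMap.compLinearMap_apply]
        at h1
      exact h1
    have hmain : α bv * oW.volumeForm (fun j => A (ch j)) = lam ^ k * δ := by
      have := hE ch
      rwa [← he, ← hδdef] at this
    have hnormsq : ∀ j, ‖A (ch j)‖ ^ 2 = μ j := by
      intro j
      rw [← real_inner_self_eq_norm_sq]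
      have h5 := hAch j j
      rwa [if_pos rfl, mul_one] at h5
    have hprodsq : (∏ j, ‖A (ch j)‖) ^ 2 = ∏ j, μ j := by
      rw [← Finset.prod_pow]
      exact Finset.prod_congr rfl fun j _ => hnormsq j
    have hamgm : ∏ j, μ j ≤ (lam ^ 2) ^ k := by
      have h7 := amgm_le hk μ hμnn
      rwa [hμsum, mul_comm, mul_div_assoc, div_self (by positivity : (k:ℝ) ≠ 0), mul_one] at h7
    have hprodle : ∏ j, ‖A (ch j)‖ ≤ lam ^ k := by
      have h8 : (∏ j, ‖A (ch j)‖) ^ 2 ≤ (lam ^ k) ^ 2 := by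
        rw [hprodsq, ← pow_mul, mul_comm k 2, pow_mul]
        exact hamgm
      have h9 : 0 ≤ ∏ j, ‖A (ch j)‖ := Finset.prod_nonneg fun j _ => norm_nonneg _
      exact (pow_le_pow_iff_left₀ h9 (pow_pos hlampos k).le two_ne_zero).mp h8
    have hVWle : |oW.volumeForm (fun j => A (ch j))| ≤ ∏ j, ‖A (ch j)‖ :=
      oW.abs_volumeForm_apply_le _
    have hαle : |α bv| ≤ 1 := hcomass bv hbv_on
    have heq1 : |α bv| * |oW.volumeForm (fun j => A (ch j))| = lam ^ k := by
      rw [← abs_mul, hmain, abs_mul, hδ, mul_one, abs_of_pos (pow_pos hlampos k)]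
    have hVWge : lam ^ k ≤ |oW.volumeForm (fun j => A (ch j))| := by
      rw [← heq1]
      exact mul_le_of_le_one_left (abs_nonneg _) hαle
    have hVWeq : |oW.volumeForm (fun j => A (ch j))| = lam ^ k :=
      le_antisymm (hVWle.trans hprodle) hVWge
    have hαabs : |α bv| = 1 := by
      have h10 : |α bv| * lam ^ k = 1 * lam ^ k := by
        rw [one_mul, ← hVWeq, heq1, hVWeq]
      exact mul_right_cancel₀ (pow_pos hlampos k).ne' h10
    have hα2 : α bv * α bv = 1 := by
      rw [← abs_mul_abs_self (α bv), hαabs, one_mul]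
    have hprodeq : ∏ j, ‖A (ch j)‖ = lam ^ k :=
      le_antisymm hprodle (hVWge.trans hVWle)
    have hμall : ∀ j, μ j = lam ^ 2 := by
      apply amgm_all_eq hk μ hμnn (by positivity)
      · rw [hμsum]
      · rw [← hprodsq, hprodeq, ← pow_mul, mul_comm 2 k, pow_mul]
    constructor
    · intro f hf
      have h1 := hE f
      rw [hP2 f hf] at h1
      rw [hP1 (fun j => ⟨f j, hf j⟩), hC]
      linear_combination α bv * h1
        - (oW.volumeForm fun i => A (f i)) * hα2
    · intro v w hv hw
      have hres : Tres = (lam ^ 2) • (LinearMap.id : ↥Vvᗮ →ₗ[ℝ] ↥Vvᗮ) := by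
        apply eigb.toBasis.ext
        intro i
        have h2 : eigb.toBasis i = eigb i := by rw [OrthonormalBasis.coe_toBasis]
        have h3 : Tres (eigb i) = μ i • eigb i :=
          Module.End.mem_eigenspace_iff.mp (hTressym.hasEigenvector_eigenvectorBasis hVh i).1
        rw [h2, h3, hμall i]
        simp
      have h4 : T v = ((Tres ⟨v, hv⟩ : ↥Vvᗮ) : V) := rfl
      rw [← hTinner, h4, hres]
      simp only [LinearMap.smul_apply, LinearMap.id_coe, id_eq, SetLike.val_smul,
        real_inner_smul_left]
end Aux
end

section
/- (Divergence commutes with Λ^q(du) for skew-symmetric vector-valued forms.) Let u : (M,h) → (L,g) be a smooth map and P a smooth section of T*M ⊗ Λ^q(TM) which is totally skew-symmetric under the metric identification of TM with T*M. Then Div(Λ^q(du)(P)) = Λ^q(du)(Div(P)) as sections of u*(Λ^q TL), where Div is taken with respect to the Levi-Civita connections and Λ^q(du) acts fibrewise on the Λ^q(TM) factor. The key mechanism: the second-derivative terms ∂²u^{v}/∂x^j∂x^t, symmetric in (j,t), contract against P^{t…}_j which is skew in (j,t), hence vanish. -/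
/-- The coordinate directional derivative `∂_i g` on Euclidean space. -/
noncomputable def Dcoord {n : ℕ} (i : Fin n)
    (g : EuclideanSpace ℝ (Fin n) → ℝ) (x : EuclideanSpace ℝ (Fin n)) : ℝ :=
  fderiv ℝ g x (EuclideanSpace.single i 1)

lemma aux_triple {ι κ μ : Type*} [Fintype ι] [Fintype κ] [Fintype μ] {f : ι → κ → μ → ℝ}
    (h : ∀ m : μ, ∑ i : ι, ∑ k : κ, f i k m = 0) :
    ∑ i : ι, ∑ k : κ, ∑ m : μ, f i k m = 0 := by
  calc ∑ i : ι, ∑ k : κ, ∑ m : μ, f i k m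
      = ∑ i : ι, ∑ m : μ, ∑ k : κ, f i k m :=
        Finset.sum_congr rfl fun i _ => Finset.sum_comm
    _ = ∑ m : μ, ∑ i : ι, ∑ k : κ, f i k m := Finset.sum_comm
    _ = 0 := by simp [h]

lemma zero_aux {n q : ℕ} (Pv : (Fin (q + 1) → Fin n) → ℝ)
    (hskew : ∀ (idx : Fin (q + 1) → Fin n) (σ : Equiv.Perm (Fin (q + 1))),
      Pv (idx ∘ σ) = ((Equiv.Perm.sign σ : ℤ) : ℝ) * Pv idx)
    (c : Fin q → Fin n → ℝ) (B : Fin n → Fin n → ℝ) (hB : ∀ a b, B a b = B b a) (ℓ : Fin q) :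
    ∑ j : Fin n, ∑ t : Fin q → Fin n,
      Pv (Fin.cons j t) * ((∏ s ∈ Finset.univ.erase ℓ, c s (t s)) * B j (t ℓ)) = 0 := by
  classical
  set F : Fin n × (Fin q → Fin n) → ℝ := fun p =>
    Pv (Fin.cons p.1 p.2) * ((∏ s ∈ Finset.univ.erase ℓ, c s (p.2 s)) * B p.1 (p.2 ℓ)) with hF
  set E : Fin n × (Fin q → Fin n) → Fin n × (Fin q → Fin n) :=
    fun p => (p.2 ℓ, Function.update p.2 ℓ p.1) with hE
  have hinv : Function.Involutive E := by
    rintro ⟨j, t⟩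
    simp [hE, Function.update_idem]
  have hneg : ∀ p, F (E p) = -F p := by
    rintro ⟨j, t⟩
    have hcons : Fin.cons (t ℓ) (Function.update t ℓ j)
        = Fin.cons j t ∘ (Equiv.swap (0 : Fin (q + 1)) ℓ.succ) := by
      funext i
      refine Fin.cases ?_ (fun m => ?_) i
      · simp [Equiv.swap_apply_left]
      · by_cases h : m = ℓ
        · subst h
          simp [Equiv.swap_apply_right]
        · have h1 : (m.succ : Fin (q + 1)) ≠ 0 := Fin.succ_ne_zero m
          have h2 : (m.succ : Fin (q + 1)) ≠ ℓ.succ := fun h' => h (Fin.succ_injective _ h')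
          simp [Equiv.swap_apply_of_ne_of_ne h1 h2, Function.update_of_ne h]
    have hP : Pv (Fin.cons (t ℓ) (Function.update t ℓ j)) = -Pv (Fin.cons j t) := by
      rw [hcons, hskew]
      rw [Equiv.Perm.sign_swap (Ne.symm (Fin.succ_ne_zero ℓ))]
      norm_num
    have hprod : ∏ s ∈ Finset.univ.erase ℓ, c s (Function.update t ℓ j s)
        = ∏ s ∈ Finset.univ.erase ℓ, c s (t s) :=
      Finset.prod_congr rfl fun s hs => by
        rw [Function.update_of_ne (Finset.ne_of_mem_erase hs)]
    simp only [hF, hE, Function.update_self]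
    rw [hP, hprod, hB (t ℓ) j]
    ring
  have h1 : ∑ p : Fin n × (Fin q → Fin n), F (E p) = ∑ p, F p := by
    have := Equiv.sum_comp (Function.Involutive.toPerm E hinv) F
    simpa using this
  have h2 : ∑ p : Fin n × (Fin q → Fin n), F (E p) = -∑ p, F p := by
    simp only [hneg]
    exact Finset.sum_neg_distrib _
  have h3 : ∑ p : Fin n × (Fin q → Fin n), F p = 0 := by linarith [h1, h2]
  have h4 := Fintype.sum_prod_type (f := F)
  simp only [hF] at h4
  rw [← h4]
  exact h3

/-- Divergence commutes with `Λ^q(du)` for totally skew-symmetric vector-valued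
forms (flat coordinate model). `u : ℝⁿ → ℝˡ` is `C²`, and `P`, a section of
`T^*M ⊗ Λ^q(TM)` with components `P_j^{t₁⋯t_q}`, is totally skew in all `q+1`
indices. The components of `A = Λ^q(du)(P)` are
`A_j^{v₁⋯v_q} = ∑_t P_j^{t₁⋯t_q} ∂u^{v₁}/∂x^{t₁} ⋯ ∂u^{v_q}/∂x^{t_q}`, and
`(Div A)^{v} = ∑_j ∂_j A_j^{v}` equals `Λ^q(du)(Div P)^{v}
= ∑_t (∑_j ∂_j P_j^{t}) ∂u^{v₁}/∂x^{t₁} ⋯ ∂u^{v_q}/∂x^{t_q}`: the second-derivative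
terms, symmetric in `(j, t_ℓ)`, cancel against the skew-symmetry of `P`. -/
theorem stmt_16 (n l q : ℕ)
    (u : EuclideanSpace ℝ (Fin n) → EuclideanSpace ℝ (Fin l)) (hu : ContDiff ℝ 2 u)
    (P : EuclideanSpace ℝ (Fin n) → ((Fin (q + 1) → Fin n) → ℝ))
    (hPsmooth : ∀ idx, ContDiff ℝ 1 (fun x => P x idx))
    (hskew : ∀ (x) (idx : Fin (q + 1) → Fin n) (σ : Equiv.Perm (Fin (q + 1))),
      P x (idx ∘ σ) = ((Equiv.Perm.sign σ : ℤ) : ℝ) * P x idx)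
    (x : EuclideanSpace ℝ (Fin n)) (v : Fin q → Fin l) :
    (∑ j : Fin n, Dcoord j (fun y => ∑ t : Fin q → Fin n,
        P y (Fin.cons j t) * ∏ s, Dcoord (t s) (fun z => u z (v s)) y) x) =
      ∑ t : Fin q → Fin n, (∑ j : Fin n, Dcoord j (fun y => P y (Fin.cons j t)) x) *
        ∏ s, Dcoord (t s) (fun z => u z (v s)) x := by
  classical
  have hf : ∀ s : Fin q, ContDiff ℝ 2 (fun z => u z (v s)) := by
    intro s
    have h := (EuclideanSpace.proj (v s) :
      EuclideanSpace ℝ (Fin l) →L[ℝ] ℝ).contDiff.comp hu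
    simpa [Function.comp_def] using h
  have hfd : ∀ s : Fin q, ContDiff ℝ 1 (fderiv ℝ (fun z => u z (v s))) := fun s =>
    (hf s).fderiv_right (by norm_num)
  have hdC : ∀ (s : Fin q) (i : Fin n),
      ContDiff ℝ 1 (fun y => Dcoord i (fun z => u z (v s)) y) := by
    intro s i
    have h := (ContinuousLinearMap.apply ℝ ℝ
      (EuclideanSpace.single i 1)).contDiff.comp (hfd s)
    simpa [Function.comp_def, Dcoord, ContinuousLinearMap.apply_apply] using h
  have hdd : ∀ (s : Fin q) (i : Fin n) (y : EuclideanSpace ℝ (Fin n)),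
      DifferentiableAt ℝ (fun y => Dcoord i (fun z => u z (v s)) y) y := fun s i y =>
    ((hdC s i).differentiable one_ne_zero) y
  have hPd : ∀ (idx : Fin (q + 1) → Fin n) (y : EuclideanSpace ℝ (Fin n)),
      DifferentiableAt ℝ (fun z => P z idx) y := fun idx y =>
    ((hPsmooth idx).differentiable one_ne_zero) y
  -- symmetry of the second derivative
  have hsym : ∀ (s : Fin q) (i j : Fin n),
      Dcoord j (fun y => Dcoord i (fun z => u z (v s)) y) x
        = Dcoord i (fun y => Dcoord j (fun z => u z (v s)) y) x := by
    intro s i j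
    have key : ∀ a b : Fin n,
        Dcoord b (fun y => Dcoord a (fun z => u z (v s)) y) x
          = fderiv ℝ (fderiv ℝ (fun z => u z (v s))) x
              (EuclideanSpace.single b 1) (EuclideanSpace.single a 1) := by
      intro a b
      have H : HasFDerivAt
          (fun y => fderiv ℝ (fun z => u z (v s)) y (EuclideanSpace.single a 1))
          ((fderiv ℝ (fderiv ℝ (fun z => u z (v s))) x).flip (EuclideanSpace.single a 1)) x := by
        have h0 := (((hfd s).differentiable one_ne_zero) x).hasFDerivAt.clm_apply
          (hasFDerivAt_const (EuclideanSpace.single a 1) x)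
        simpa using h0
      show fderiv ℝ (fun y => fderiv ℝ (fun z => u z (v s)) y (EuclideanSpace.single a 1)) x
          (EuclideanSpace.single b 1) = _
      rw [H.fderiv]
      simp
    rw [key i j, key j i]
    exact ((hf s).contDiffAt.isSymmSndFDerivAt (by simp)).eq _ _
  -- the derivative of each summand
  have key : ∀ j : Fin n,
      Dcoord j (fun y => ∑ t : Fin q → Fin n,
          P y (Fin.cons j t) * ∏ s, Dcoord (t s) (fun z => u z (v s)) y) x
        = ∑ t : Fin q → Fin n,
            (P x (Fin.cons j t) * ∑ ℓ : Fin q,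
              (∏ s ∈ Finset.univ.erase ℓ, Dcoord (t s) (fun z => u z (v s)) x) *
                Dcoord j (fun y => Dcoord (t ℓ) (fun z => u z (v ℓ)) y) x
            + (∏ s, Dcoord (t s) (fun z => u z (v s)) x) *
                Dcoord j (fun y => P y (Fin.cons j t)) x) := by
    intro j
    have hterm : ∀ t : Fin q → Fin n,
        HasFDerivAt (fun y => P y (Fin.cons j t) * ∏ s, Dcoord (t s) (fun z => u z (v s)) y)
          (P x (Fin.cons j t) • (∑ ℓ : Fin q,
              (∏ s ∈ Finset.univ.erase ℓ, Dcoord (t s) (fun z => u z (v s)) x) •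
                fderiv ℝ (fun y => Dcoord (t ℓ) (fun z => u z (v ℓ)) y) x)
            + (∏ s, Dcoord (t s) (fun z => u z (v s)) x) •
                fderiv ℝ (fun y => P y (Fin.cons j t)) x) x := by
      intro t
      have hprod : HasFDerivAt (fun y => ∏ s, Dcoord (t s) (fun z => u z (v s)) y)
          (∑ ℓ : Fin q, (∏ s ∈ Finset.univ.erase ℓ, Dcoord (t s) (fun z => u z (v s)) x) •
            fderiv ℝ (fun y => Dcoord (t ℓ) (fun z => u z (v ℓ)) y) x) x :=
        HasFDerivAt.finset_prod fun ℓ _ => ((hdd ℓ (t ℓ) x).hasFDerivAt)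
      exact ((hPd (Fin.cons j t) x).hasFDerivAt).mul hprod
    have hA : HasFDerivAt (fun y => ∑ t : Fin q → Fin n,
          P y (Fin.cons j t) * ∏ s, Dcoord (t s) (fun z => u z (v s)) y)
        (∑ t : Fin q → Fin n,
          (P x (Fin.cons j t) • (∑ ℓ : Fin q,
              (∏ s ∈ Finset.univ.erase ℓ, Dcoord (t s) (fun z => u z (v s)) x) •
                fderiv ℝ (fun y => Dcoord (t ℓ) (fun z => u z (v ℓ)) y) x)
            + (∏ s, Dcoord (t s) (fun z => u z (v s)) x) •
                fderiv ℝ (fun y => P y (Fin.cons j t)) x)) x :=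
      HasFDerivAt.fun_sum fun t _ => hterm t
    show fderiv ℝ (fun y => ∑ t : Fin q → Fin n,
        P y (Fin.cons j t) * ∏ s, Dcoord (t s) (fun z => u z (v s)) y) x
        (EuclideanSpace.single j 1) = _
    rw [hA.fderiv]
    simp only [ContinuousLinearMap.sum_apply, ContinuousLinearMap.add_apply,
      ContinuousLinearMap.smul_apply, smul_eq_mul]
    rfl
  have hAzero : ∑ j : Fin n, ∑ t : Fin q → Fin n,
      P x (Fin.cons j t) * ∑ ℓ : Fin q,
        (∏ s ∈ Finset.univ.erase ℓ, Dcoord (t s) (fun z => u z (v s)) x) *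
          Dcoord j (fun y => Dcoord (t ℓ) (fun z => u z (v ℓ)) y) x = 0 := by
    have h0 : ∀ ℓ : Fin q, ∑ j : Fin n, ∑ t : Fin q → Fin n,
        P x (Fin.cons j t) * ((∏ s ∈ Finset.univ.erase ℓ, Dcoord (t s) (fun z => u z (v s)) x) *
          Dcoord j (fun y => Dcoord (t ℓ) (fun z => u z (v ℓ)) y) x) = 0 := fun ℓ =>
      zero_aux (P x) (hskew x) (fun s i => Dcoord i (fun z => u z (v s)) x)
        (fun a b => Dcoord a (fun y => Dcoord b (fun z => u z (v ℓ)) y) x)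
        (fun a b => hsym ℓ b a) ℓ
    simp only [Finset.mul_sum]
    exact aux_triple h0
  calc (∑ j : Fin n, Dcoord j (fun y => ∑ t : Fin q → Fin n,
        P y (Fin.cons j t) * ∏ s, Dcoord (t s) (fun z => u z (v s)) y) x)
      = ∑ j : Fin n, ∑ t : Fin q → Fin n,
          (P x (Fin.cons j t) * ∑ ℓ : Fin q,
              (∏ s ∈ Finset.univ.erase ℓ, Dcoord (t s) (fun z => u z (v s)) x) *
                Dcoord j (fun y => Dcoord (t ℓ) (fun z => u z (v ℓ)) y) x
            + (∏ s, Dcoord (t s) (fun z => u z (v s)) x) *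
                Dcoord j (fun y => P y (Fin.cons j t)) x) :=
        Finset.sum_congr rfl fun j _ => key j
    _ = (∑ j : Fin n, ∑ t : Fin q → Fin n, P x (Fin.cons j t) * ∑ ℓ : Fin q,
            (∏ s ∈ Finset.univ.erase ℓ, Dcoord (t s) (fun z => u z (v s)) x) *
              Dcoord j (fun y => Dcoord (t ℓ) (fun z => u z (v ℓ)) y) x)
        + ∑ j : Fin n, ∑ t : Fin q → Fin n, (∏ s, Dcoord (t s) (fun z => u z (v s)) x) *
            Dcoord j (fun y => P y (Fin.cons j t)) x := by
        simp [Finset.sum_add_distrib]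
    _ = ∑ j : Fin n, ∑ t : Fin q → Fin n, (∏ s, Dcoord (t s) (fun z => u z (v s)) x) *
            Dcoord j (fun y => P y (Fin.cons j t)) x := by
        rw [hAzero, zero_add]
    _ = ∑ t : Fin q → Fin n, ∑ j : Fin n, (∏ s, Dcoord (t s) (fun z => u z (v s)) x) *
            Dcoord j (fun y => P y (Fin.cons j t)) x := Finset.sum_comm
    _ = ∑ t : Fin q → Fin n, (∑ j : Fin n, Dcoord j (fun y => P y (Fin.cons j t)) x) *
          ∏ s, Dcoord (t s) (fun z => u z (v s)) x := by
        refine Finset.sum_congr rfl fun t _ => ?_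
        rw [← Finset.mul_sum, mul_comm]
end

section
/- (Converse Smith immersion equation, pointwise version.) Let A : V₁ → V₂ be a linear map between oriented inner product spaces with dim V₁ = k, α a k-form on V₂ of comass at most one, λ = |A|/√k, and P_α the index-raised vector-valued (k−1)-form of α. If P_α ∘ Λ^{k-1}A ∘ ⋆_{V₁} = (−1)^{k-1} λ^{k-2} A (as maps V₁ → V₂), then A*α = λ^k vol_{V₁}; i.e., evaluating the hypothesis against A(e_j) for an oriented orthonormal basis e₁,…,e_k of V₁ yields ⟨A e_i, A e_j⟩ = 0 for i ≠ j and λ^{k-2}⟨A e_i, A e_i⟩ vol_{V₁} = A*α for each i, whence A*α = (1/k) λ^{k-2} |A|² vol_{V₁} = λ^k vol_{V₁}. -/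
open scoped RealInnerProductSpace

/-- Converse Smith immersion equation, pointwise version, with `k = m + 2 ≥ 2`.
`A : V₁ → V₂` linear, `dim V₁ = k`, `α` a `k`-form on `V₂` of comass at most one,
`λ = |A|/√k` (Hilbert–Schmidt norm), `P_α` the index-raised vector-valued
`(k-1)`-form of `α` (`⟪P_α(w₁∧⋯∧w_{k-1}), v⟫ = α(w₁,…,w_{k-1},v)`). The hypothesis
`P_α ∘ Λ^{k-1}A ∘ ⋆_{V₁} = (−1)^{k-1} λ^{k-2} A` is expressed on an oriented
orthonormal basis `e` of `V₁` using `⋆ e_i = (−1)^i e₀ ∧ ⋯ ∧ ê_i ∧ ⋯ ∧ e_{k-1}`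
(0-based). The conclusion is `A^*α = λ^k vol_{V₁}`. -/
theorem stmt_19 {V₁ V₂ : Type*} [NormedAddCommGroup V₁] [InnerProductSpace ℝ V₁]
    [NormedAddCommGroup V₂] [InnerProductSpace ℝ V₂]
    (m : ℕ) [Fact (Module.finrank ℝ V₁ = m + 2)]
    (o : Orientation ℝ V₁ (Fin (m + 2))) (A : V₁ →ₗ[ℝ] V₂)
    (α : V₂ [⋀^Fin (m + 2)]→ₗ[ℝ] ℝ)
    (hcomass : ∀ v : Fin (m + 2) → V₂, Orthonormal ℝ v → |α v| ≤ 1)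
    (Pα : (Fin (m + 1) → V₂) → V₂)
    (hPα : ∀ (w : Fin (m + 1) → V₂) (v : V₂), ⟪Pα w, v⟫ = α (Fin.snoc w v))
    (e : OrthonormalBasis (Fin (m + 2)) ℝ V₁) (he : e.toBasis.orientation = o)
    (lam : ℝ)
    (hlam : lam = Real.sqrt (∑ i, ‖A (e i)‖ ^ 2) / Real.sqrt (m + 2))
    (hyp : ∀ i : Fin (m + 2),
      ((-1 : ℝ) ^ (i : ℕ)) • Pα (fun j => A (e (i.succAbove j))) =
        ((-1 : ℝ) ^ (m + 1) * lam ^ m) • A (e i)) :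
    α.compLinearMap A = lam ^ (m + 2) • o.volumeForm := by
  classical
  set g : Fin (m + 2) → V₂ := fun j => A (e j) with hg
  set c : ℝ := α g with hc
  -- key pointwise identity
  have key : ∀ i : Fin (m + 2), c = lam ^ m * ‖A (e i)‖ ^ 2 := by
    intro i
    set σ : Equiv.Perm (Fin (m + 2)) := (Fin.cycleRange i)⁻¹ * finRotate (m + 2) with hσdef
    have hσ : (Fin.snoc (fun j => A (e (i.succAbove j))) (A (e i)) : Fin (m + 2) → V₂)
        = g ∘ σ := by
      funext x
      refine Fin.lastCases ?_ (fun j => ?_) x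
      · have h1 : σ (Fin.last (m + 1)) = i := by
          have : (Fin.cycleRange i)⁻¹ (0 : Fin (m + 2)) = i := by
            rw [Equiv.Perm.inv_eq_iff_eq, Fin.cycleRange_self]
          simp [hσdef, Equiv.Perm.mul_apply, finRotate_last, this]
        simp [h1, Fin.snoc_last, hg]
      · have h1 : σ (Fin.castSucc j) = i.succAbove j := by
          have h2 : finRotate (m + 2) (Fin.castSucc j) = j.succ := by
            rw [finRotate_succ_apply, Fin.coeSucc_eq_succ]
          have h3 : (Fin.cycleRange i)⁻¹ j.succ = i.succAbove j := by
            rw [Equiv.Perm.inv_eq_iff_eq, Fin.cycleRange_succAbove]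
          simp [hσdef, Equiv.Perm.mul_apply, h2, h3]
        simp [h1, Fin.snoc_castSucc, hg]
    have hsign : (Equiv.Perm.sign σ : ℤ) = (-1 : ℤ) ^ (m + 1 + i) := by
      simp [hσdef, sign_finRotate, Fin.sign_cycleRange, pow_add, mul_comm]
    have h1 := congrArg (fun x : V₂ => ⟪x, A (e i)⟫) (hyp i)
    simp only [inner_smul_left, RCLike.conj_to_real, hPα] at h1
    have hperm : α (Fin.snoc (fun j => A (e (i.succAbove j))) (A (e i)))
        = ((-1 : ℝ) ^ (m + 1 + i)) * c := by
      rw [hσ, α.map_perm]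
      have : ((Equiv.Perm.sign σ : ℤ) : ℝ) = (-1 : ℝ) ^ (m + 1 + i) := by
        rw [hsign]; push_cast; ring
      rw [← hc, Units.smul_def, zsmul_eq_mul, this]
    rw [hperm, real_inner_self_eq_norm_sq] at h1
    have h2 : (-1 : ℝ) ^ (m + 1) * c = (-1 : ℝ) ^ (m + 1) * (lam ^ m * ‖A (e i)‖ ^ 2) := by
      have hii : (-1 : ℝ) ^ (i : ℕ) * ((-1 : ℝ) ^ (m + 1 + (i : ℕ)) * c)
          = (-1 : ℝ) ^ (m + 1) * c := by
        have h4 : (-1 : ℝ) ^ (i : ℕ) * (-1 : ℝ) ^ (i : ℕ) = 1 := by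
          rw [← pow_add, ← two_mul, pow_mul]; norm_num
        rw [pow_add,
          show (-1 : ℝ) ^ (i : ℕ) * ((-1 : ℝ) ^ (m + 1) * (-1 : ℝ) ^ (i : ℕ) * c)
            = ((-1 : ℝ) ^ (i : ℕ) * (-1 : ℝ) ^ (i : ℕ)) * ((-1 : ℝ) ^ (m + 1) * c) from by
            ring, h4, one_mul]
      rw [hii] at h1
      rw [h1]; ring
    exact mul_left_cancel₀ (pow_ne_zero _ (by norm_num)) h2
  -- sum over i
  have hsum : (m + 2 : ℝ) * c = lam ^ m * ∑ i, ‖A (e i)‖ ^ 2 := by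
    have h : ∑ i : Fin (m + 2), c = ∑ i : Fin (m + 2), lam ^ m * ‖A (e i)‖ ^ 2 :=
      Finset.sum_congr rfl (fun i _ => key i)
    simp only [Finset.sum_const, Finset.card_univ, Fintype.card_fin, nsmul_eq_mul,
      ← Finset.mul_sum] at h
    push_cast at h ⊢
    linarith [h]
  have hS : (0 : ℝ) ≤ ∑ i, ‖A (e i)‖ ^ 2 := by positivity
  have hlam2 : lam ^ 2 = (∑ i, ‖A (e i)‖ ^ 2) / (m + 2) := by
    rw [hlam, div_pow, Real.sq_sqrt hS, Real.sq_sqrt (by positivity)]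
  have hcval : c = lam ^ (m + 2) := by
    have hm2 : (m + 2 : ℝ) ≠ 0 := by positivity
    have : lam ^ (m + 2) = lam ^ m * lam ^ 2 := by ring
    rw [this, hlam2]
    field_simp
    linarith [hsum]
  -- conclude
  have hvol : o.volumeForm = e.toBasis.det := o.volumeForm_robust e he
  have heq := (α.compLinearMap A).eq_smul_basis_det e.toBasis
  have hbasis : (α.compLinearMap A) e.toBasis = c := by
    simp [AlternatingMap.compLinearMap_apply, hc, hg]
  rw [heq, hbasis, hcval, hvol]
end
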